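/- arXiv:2309.02021 — 7 statements merged into one kernel-verified Lean document; each statement's English description precedes it below -/
import Mathlib

section
/- Suppose that for all compartments α, β ∈ X the kernels satisfy G_{αβ} ∈ L¹_loc(ℝ₊; ℝ₊^{|β|×|α|}) and K_α ∈ L¹_loc(ℝ₊; ℝ₊^{|α|×|α|}), and the forcing functions satisfy S_α⁰, J_α⁰ ∈ L¹_loc(ℝ₊; ℝ₊^{|α|}), and let (N_α, S_α, J_α) be the unique solution of the generalized RFE system. Assume in addition that for all α ∈ X and all j ∈ α one has ∫₀^∞ e_α^⊤ J_α⁰(r) dr ≤ N_α⁰ and ∫₀^∞ [e_α^⊤ K_α(r)]_j dr ≤ 1. Then N_α(t) ≥ 0 for all t ≥ 0 and all α ∈ X. -/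
open MeasureTheory Matrix

/-- A solution of the generalized Response Function Equation (RFE) system. -/
def IsGenRFESol {X : Type*} [Fintype X] [DecidableEq X] (d : X → ℕ)
    (G : (α β : X) → ℝ → Matrix (Fin (d β)) (Fin (d α)) ℝ)
    (K : (α : X) → ℝ → Matrix (Fin (d α)) (Fin (d α)) ℝ)
    (S0 J0 : (α : X) → ℝ → Fin (d α) → ℝ)
    (N0 : X → ℝ)
    (S J : (α : X) → ℝ → Fin (d α) → ℝ) (N : X → ℝ → ℝ) : Prop :=
  (∀ α i, LocallyIntegrableOn (fun t => S α t i) (Set.Ici 0)) ∧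
  (∀ α i, LocallyIntegrableOn (fun t => J α t i) (Set.Ici 0)) ∧
  (∀ α i t, 0 ≤ t → 0 ≤ S α t i) ∧
  (∀ α i t, 0 ≤ t → 0 ≤ J α t i) ∧
  (∀ α, ∀ᵐ t ∂(volume.restrict (Set.Ici (0:ℝ))),
      S α t = S0 α t + ∑ β ∈ Finset.univ.erase α,
        ∫ s in (0:ℝ)..t, (G β α (t - s)).mulVec (S β s)) ∧
  (∀ α, ∀ᵐ t ∂(volume.restrict (Set.Ici (0:ℝ))),
      J α t = J0 α t + ∫ s in (0:ℝ)..t, (K α (t - s)).mulVec (S α s)) ∧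
  (∀ α, N α 0 = N0 α) ∧
  (∀ α t, 0 ≤ t →
      N α t = N0 α + ∫ s in (0:ℝ)..t, ((∑ i, S α s i) - (∑ i, J α s i)))

/-!
Since `N_α(t) = N_α⁰ + ∫₀ᵗ e_α^⊤ S_α - ∫₀ᵗ e_α^⊤ J_α`, it suffices that the output up to time `t`
is at most `N_α⁰` plus the input. The forcing `J_α⁰` contributes at most `N_α⁰`, and by Tonelli
the convolution part contributes
`∫₀ᵗ e_α^⊤ ∫₀ᵘ K_α(u - s) S_α(s) ds du ≤ ∑_j ∫₀^∞ [e_α^⊤ K_α]_j · ∫₀ᵗ [S_α]_j ≤ ∫₀ᵗ e_α^⊤ S_α`.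
The estimates are made in `ℝ≥0∞`, where extending `K_α` by zero on `(-∞, 0)` and `S_α` by zero
outside `(0, t]` turns the causal convolution into a convolution on `ℝ`.
-/

open Set
open scoped ENNReal

theorem lintegral_lconvolution {G : Type*} [MeasurableSpace G] [AddGroup G] [MeasurableAdd₂ G]
    [MeasurableNeg G] {μ : Measure G} [μ.IsAddLeftInvariant] [SFinite μ] {f g : G → ℝ≥0∞}
    (hf : AEMeasurable f μ) (hg : AEMeasurable g μ) :
    ∫⁻ x, (f ⋆ₗ[μ] g) x ∂μ = (∫⁻ x, f x ∂μ) * ∫⁻ x, g x ∂μ := by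
  simp only [lconvolution_def]
  rw [lintegral_lintegral_swap (by fun_prop), ← lintegral_mul_const'' _ hf]
  congr 1 with y
  rw [lintegral_const_mul'' _ (f := fun x => g (-y + x))
      (hg.comp_quasiMeasurePreserving (measurePreserving_add_left μ (-y)).quasiMeasurePreserving),
    lintegral_add_left_eq_self]

section CausalConvolution

variable {ι : Type*} [Fintype ι]

noncomputable def causalConv (φ κ : ι → ℝ → ℝ≥0∞) (u : ℝ) : ℝ≥0∞ :=
  ∫⁻ s in Ioc 0 u, ∑ j, φ j s * κ j (u - s)

variable {φ κ : ι → ℝ → ℝ≥0∞} {t : ℝ}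

theorem causalConv_eq_sum_lconvolution
    (hφ : ∀ j, AEMeasurable (φ j) (volume.restrict (Ioc 0 t)))
    (hκ : ∀ j, AEMeasurable (κ j) (volume.restrict (Ici 0))) {u : ℝ} (hu : u ∈ Ioc 0 t) :
    causalConv φ κ u = ∑ j, ((Ioc 0 t).indicator (φ j) ⋆ₗ (Ici 0).indicator (κ j)) u := by
  have hφ' j := (aemeasurable_indicator_iff measurableSet_Ioc).2 (hφ j)
  have hκ' j := (aemeasurable_indicator_iff measurableSet_Ici).2 (hκ j)
  simp only [causalConv, lconvolution_def, neg_add_eq_sub]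
  rw [← lintegral_finsetSum'
      (f := fun j s => (Ioc 0 t).indicator (φ j) s * (Ici 0).indicator (κ j) (u - s)) _
      fun j _ => (hφ' j).mul
        ((hκ' j).comp_quasiMeasurePreserving (quasiMeasurePreserving_sub_left volume u)),
    ← lintegral_indicator measurableSet_Ioc]
  congr 1 with s
  by_cases hs : s ∈ Ioc 0 u
  · have hst : s ∈ Ioc 0 t := ⟨hs.1, hs.2.trans hu.2⟩
    have hus : u - s ∈ Ici 0 := sub_nonneg.2 hs.2
    simp [hs, hst, hus]
  · refine (indicator_of_notMem hs _).trans (Finset.sum_eq_zero fun j _ => ?_).symm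
    rcases not_and_or.1 hs with hs | hs
    · simp [indicator_of_notMem (show s ∉ Ioc 0 t from fun h => hs h.1)]
    · simp [indicator_of_notMem (show u - s ∉ Ici 0 from fun h => hs (sub_nonneg.1 h))]

theorem aemeasurable_causalConv
    (hφ : ∀ j, AEMeasurable (φ j) (volume.restrict (Ioc 0 t)))
    (hκ : ∀ j, AEMeasurable (κ j) (volume.restrict (Ici 0))) :
    AEMeasurable (causalConv φ κ) (volume.restrict (Ioc 0 t)) := by
  refine AEMeasurable.congr (Finset.aemeasurable_fun_sum Finset.univ fun j _ =>
      (aemeasurable_lconvolution ((aemeasurable_indicator_iff measurableSet_Ioc).2 (hφ j))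
        ((aemeasurable_indicator_iff measurableSet_Ici).2 (hκ j))).mono_measure
        Measure.restrict_le_self) ?_
  exact (ae_restrict_iff' measurableSet_Ioc).2 <| ae_of_all _ fun u hu =>
    (causalConv_eq_sum_lconvolution hφ hκ hu).symm

theorem setLIntegral_causalConv_le
    (hφ : ∀ j, AEMeasurable (φ j) (volume.restrict (Ioc 0 t)))
    (hκ : ∀ j, AEMeasurable (κ j) (volume.restrict (Ici 0))) :
    ∫⁻ u in Ioc 0 t, causalConv φ κ u ≤ ∑ j, (∫⁻ s in Ioc 0 t, φ j s) * ∫⁻ r in Ici 0, κ j r := by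
  have hφ' j := (aemeasurable_indicator_iff measurableSet_Ioc).2 (hφ j)
  have hκ' j := (aemeasurable_indicator_iff measurableSet_Ici).2 (hκ j)
  calc _ = ∫⁻ u in Ioc 0 t, ∑ j, ((Ioc 0 t).indicator (φ j) ⋆ₗ (Ici 0).indicator (κ j)) u :=
        setLIntegral_congr_fun measurableSet_Ioc fun u hu =>
          causalConv_eq_sum_lconvolution hφ hκ hu
    _ ≤ ∫⁻ u, ∑ j, ((Ioc 0 t).indicator (φ j) ⋆ₗ (Ici 0).indicator (κ j)) u :=
        setLIntegral_le_lintegral _ _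
    _ = _ := by
        rw [lintegral_finsetSum' _ fun j _ => aemeasurable_lconvolution (hφ' j) (hκ' j)]
        simp only [lintegral_lconvolution (hφ' _) (hκ' _),
          lintegral_indicator measurableSet_Ioc, lintegral_indicator measurableSet_Ici]

end CausalConvolution

theorem ofReal_sum_integral_le {α ι : Type*} [MeasurableSpace α] {μ : Measure α} [Fintype ι]
    {f : α → ι → ℝ} (hf : ∀ᵐ x ∂μ, ∀ i, 0 ≤ f x i) :
    ENNReal.ofReal (∑ i, (∫ x, f x ∂μ) i) ≤ ∫⁻ x, ENNReal.ofReal (∑ i, f x i) ∂μ := by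
  by_cases hint : Integrable f μ
  · rw [Finset.sum_congr rfl fun i _ => eval_integral hint.eval i,
      ← integral_finsetSum _ fun i _ => hint.eval i]
    exact (ofReal_integral_eq_lintegral_ofReal (integrable_finsetSum _ fun i _ => hint.eval i)
      (hf.mono fun x hx => Finset.sum_nonneg fun i _ => hx i)).le
  · simp [integral_undef hint]

theorem ofReal_sum_mulVec {m n : Type*} [Fintype m] [Fintype n] {A : Matrix m n ℝ} {v : n → ℝ}
    (hA : ∀ i j, 0 ≤ A i j) (hv : ∀ j, 0 ≤ v j) :
    ENNReal.ofReal (∑ i, (A *ᵥ v) i) = ∑ j, ENNReal.ofReal (v j) * ENNReal.ofReal (∑ i, A i j) := by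
  have hsum : ∑ i, (A *ᵥ v) i = ∑ j, v j * ∑ i, A i j := by
    simp only [mulVec, dotProduct, Finset.mul_sum]
    rw [Finset.sum_comm]
    simp only [mul_comm]
  rw [hsum, ENNReal.ofReal_sum_of_nonneg fun j _ =>
    mul_nonneg (hv j) (Finset.sum_nonneg fun i _ => hA i j)]
  simp only [ENNReal.ofReal_mul (hv _)]

theorem ofReal_sum_intervalIntegral_mulVec_le {m n : Type*} [Fintype m] [Fintype n]
    {K : ℝ → Matrix m n ℝ} {S : ℝ → n → ℝ} (hK : ∀ r, 0 ≤ r → ∀ i j, 0 ≤ K r i j)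
    (hS : ∀ j s, 0 ≤ s → 0 ≤ S s j) {u : ℝ} (hu : 0 ≤ u) :
    ENNReal.ofReal (∑ i, (∫ s in 0..u, K (u - s) *ᵥ S s) i) ≤
      causalConv (fun j s => ENNReal.ofReal (S s j)) (fun j r => ENNReal.ofReal (∑ i, K r i j))
        u := by
  rw [intervalIntegral.integral_of_le hu]
  refine (ofReal_sum_integral_le ((ae_restrict_iff' measurableSet_Ioc).2 <|
    ae_of_all _ fun s hs i => ?_)).trans_eq <| setLIntegral_congr_fun measurableSet_Ioc
      fun s hs => ofReal_sum_mulVec (hK _ (sub_nonneg.2 hs.2)) fun j => hS j s hs.1.le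
  exact Finset.sum_nonneg fun j _ => mul_nonneg (hK _ (sub_nonneg.2 hs.2) i j) (hS j s hs.1.le)

theorem add_intervalIntegral_input_sub_output_nonneg {n : Type*} [Fintype n] {K : ℝ → Matrix n n ℝ}
    {S J J0 : ℝ → n → ℝ} {N0 t : ℝ}
    (hKmeas : ∀ i j, AEMeasurable (fun r => K r i j) (volume.restrict (Ici 0)))
    (hKnn : ∀ r, 0 ≤ r → ∀ i j, 0 ≤ K r i j)
    (hKbound : ∀ j, ∫⁻ r in Ici 0, ENNReal.ofReal (∑ i, K r i j) ≤ 1)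
    (hSint : ∀ i, IntegrableOn (fun s => S s i) (Ioc 0 t)) (hSnn : ∀ i s, 0 ≤ s → 0 ≤ S s i)
    (hJint : ∀ i, IntegrableOn (fun s => J s i) (Ioc 0 t)) (hJnn : ∀ i s, 0 ≤ s → 0 ≤ J s i)
    (hJ : ∀ᵐ u ∂volume.restrict (Ioc 0 t), J u = J0 u + ∫ s in 0..u, K (u - s) *ᵥ S s)
    (hJ0 : ∫⁻ r in Ici 0, ENNReal.ofReal (∑ i, J0 r i) ≤ ENNReal.ofReal N0) (hN0 : 0 ≤ N0)
    (ht : 0 ≤ t) :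
    0 ≤ N0 + ∫ s in 0..t, ((∑ i, S s i) - (∑ i, J s i)) := by
  set φ : n → ℝ → ℝ≥0∞ := fun j s => ENNReal.ofReal (S s j)
  set κ : n → ℝ → ℝ≥0∞ := fun j r => ENNReal.ofReal (∑ i, K r i j)
  have hφ j : AEMeasurable (φ j) (volume.restrict (Ioc 0 t)) :=
    ENNReal.measurable_ofReal.comp_aemeasurable (hSint j).aemeasurable
  have hκ j : AEMeasurable (κ j) (volume.restrict (Ici 0)) :=
    ENNReal.measurable_ofReal.comp_aemeasurable
      (Finset.aemeasurable_fun_sum Finset.univ fun i _ => hKmeas i j)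
  have key : ∫⁻ u in Ioc 0 t, ENNReal.ofReal (∑ i, J u i) ≤
      ENNReal.ofReal N0 + ∫⁻ u in Ioc 0 t, ENNReal.ofReal (∑ i, S u i) :=
    calc ∫⁻ u in Ioc 0 t, ENNReal.ofReal (∑ i, J u i)
        ≤ ∫⁻ u in Ioc 0 t, ENNReal.ofReal (∑ i, J0 u i) +
            causalConv φ κ u := by
          refine lintegral_mono_ae ?_
          filter_upwards [hJ, ae_restrict_mem measurableSet_Ioc] with u hJu hu
          rw [hJu]
          simp only [Pi.add_apply, Finset.sum_add_distrib]
          exact ENNReal.ofReal_add_le.trans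
            (add_le_add_right (ofReal_sum_intervalIntegral_mulVec_le hKnn hSnn hu.1.le) _)
      _ = (∫⁻ u in Ioc 0 t, ENNReal.ofReal (∑ i, J0 u i)) +
            ∫⁻ u in Ioc 0 t, causalConv φ κ u :=
          lintegral_add_right' _ (aemeasurable_causalConv hφ hκ)
      _ ≤ ENNReal.ofReal N0 + ∑ j, (∫⁻ s in Ioc 0 t, φ j s) * ∫⁻ r in Ici 0, κ j r :=
          add_le_add ((lintegral_mono_set fun s hs => mem_Ici.2 hs.1.le).trans hJ0)
            (setLIntegral_causalConv_le hφ hκ)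
      _ ≤ ENNReal.ofReal N0 + ∑ j, ∫⁻ s in Ioc 0 t, φ j s := by
          gcongr with j
          exact mul_le_of_le_one_right' (hKbound j)
      _ = ENNReal.ofReal N0 + ∫⁻ u in Ioc 0 t, ENNReal.ofReal (∑ i, S u i) := by
          rw [← lintegral_finsetSum' _ fun j _ => hφ j]
          congr 1
          exact setLIntegral_congr_fun measurableSet_Ioc fun s hs =>
            (ENNReal.ofReal_sum_of_nonneg fun i _ => hSnn i s hs.1.le).symm
  have hsum_nn {f : ℝ → n → ℝ} (hf : ∀ i s, 0 ≤ s → 0 ≤ f s i) :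
      0 ≤ᵐ[volume.restrict (Ioc 0 t)] fun s => ∑ i, f s i :=
    (ae_restrict_iff' measurableSet_Ioc).2 <| ae_of_all _ fun s hs =>
      Finset.sum_nonneg fun i _ => hf i s hs.1.le
  have hSsum := integrable_finsetSum Finset.univ fun i _ => hSint i
  have hJsum := integrable_finsetSum Finset.univ fun i _ => hJint i
  have hSint_nn := integral_nonneg_of_ae (hsum_nn hSnn)
  suffices ∫ s in Ioc 0 t, ∑ i, J s i ≤ N0 + ∫ s in Ioc 0 t, ∑ i, S s i by
    rw [intervalIntegral.integral_sub ((intervalIntegrable_iff_integrableOn_Ioc_of_le ht).2 hSsum)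
      ((intervalIntegrable_iff_integrableOn_Ioc_of_le ht).2 hJsum),
      intervalIntegral.integral_of_le ht, intervalIntegral.integral_of_le ht]
    linarith
  rwa [← ENNReal.ofReal_le_ofReal_iff (add_nonneg hN0 hSint_nn), ENNReal.ofReal_add hN0 hSint_nn,
    ofReal_integral_eq_lintegral_ofReal hSsum (hsum_nn hSnn),
    ofReal_integral_eq_lintegral_ofReal hJsum (hsum_nn hJnn)]

theorem genRFE_positivity_general {X : Type*} [Fintype X] [DecidableEq X] (d : X → ℕ)
    (G : (α β : X) → ℝ → Matrix (Fin (d β)) (Fin (d α)) ℝ)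
    (K : (α : X) → ℝ → Matrix (Fin (d α)) (Fin (d α)) ℝ)
    (S0 J0 : (α : X) → ℝ → Fin (d α) → ℝ)
    (N0 : X → ℝ)
    (hKloc : ∀ α i j, LocallyIntegrableOn (fun t => K α t i j) (Set.Ici 0))
    (hKnn : ∀ α t, 0 ≤ t → ∀ i j, 0 ≤ K α t i j)
    (hN0 : ∀ α, 0 ≤ N0 α)
    (S J : (α : X) → ℝ → Fin (d α) → ℝ) (N : X → ℝ → ℝ)
    (hsol : IsGenRFESol d G K S0 J0 N0 S J N)
    -- `∫₀^∞ e_α^⊤ J_α⁰(r) dr ≤ N_α⁰`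
    (hJ0bound : ∀ α, ∫⁻ r in Set.Ici (0:ℝ), ENNReal.ofReal (∑ i, J0 α r i)
        ≤ ENNReal.ofReal (N0 α))
    -- `∫₀^∞ [e_α^⊤ K_α(r)]_j dr ≤ 1`
    (hKbound : ∀ α (j : Fin (d α)),
        ∫⁻ r in Set.Ici (0:ℝ), ENNReal.ofReal (∑ i, K α r i j) ≤ 1) :
    ∀ α t, 0 ≤ t → 0 ≤ N α t := by
  obtain ⟨hSloc, hJloc, hSnn, hJnn, -, hJeq, -, hNeq⟩ := hsol
  intro α t ht
  have integrableOn_Ioc {f : ℝ → ℝ} (hf : LocallyIntegrableOn f (Ici 0)) :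
      IntegrableOn f (Ioc 0 t) :=
    (hf.integrableOn_compact_subset Icc_subset_Ici_self isCompact_Icc).mono_set
      Ioc_subset_Icc_self
  rw [hNeq α t ht]
  exact add_intervalIntegral_input_sub_output_nonneg
    (fun i j => (hKloc α i j).aestronglyMeasurable.aemeasurable) (hKnn α) (hKbound α)
    (fun i => integrableOn_Ioc (hSloc α i)) (hSnn α) (fun i => integrableOn_Ioc (hJloc α i))
    (hJnn α) (ae_restrict_of_ae_restrict_of_subset (fun s hs => mem_Ici.2 hs.1.le) (hJeq α))
    (hJ0bound α) (hN0 α) ht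

/-- **Positivity of the concentrations for the generalized RFE system.**
Under the local integrability and nonnegativity assumptions on the kernels and forcing
functions, if moreover `∫₀^∞ e_α^⊤ J_α⁰(r) dr ≤ N_α⁰` and `∫₀^∞ [e_α^⊤ K_α(r)]_j dr ≤ 1`
for all `α ∈ X` and `j ∈ α`, then the solution satisfies `N_α(t) ≥ 0` for all `t ≥ 0`. -/
theorem genRFE_positivity {X : Type*} [Fintype X] [DecidableEq X] (d : X → ℕ)
    (G : (α β : X) → ℝ → Matrix (Fin (d β)) (Fin (d α)) ℝ)
    (K : (α : X) → ℝ → Matrix (Fin (d α)) (Fin (d α)) ℝ)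
    (S0 J0 : (α : X) → ℝ → Fin (d α) → ℝ)
    (N0 : X → ℝ)
    (hGloc : ∀ α β i j, LocallyIntegrableOn (fun t => G α β t i j) (Set.Ici 0))
    (hGnn : ∀ α β t, 0 ≤ t → ∀ i j, 0 ≤ G α β t i j)
    (hKloc : ∀ α i j, LocallyIntegrableOn (fun t => K α t i j) (Set.Ici 0))
    (hKnn : ∀ α t, 0 ≤ t → ∀ i j, 0 ≤ K α t i j)
    (hS0loc : ∀ α i, LocallyIntegrableOn (fun t => S0 α t i) (Set.Ici 0))
    (hS0nn : ∀ α t, 0 ≤ t → ∀ i, 0 ≤ S0 α t i)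
    (hJ0loc : ∀ α i, LocallyIntegrableOn (fun t => J0 α t i) (Set.Ici 0))
    (hJ0nn : ∀ α t, 0 ≤ t → ∀ i, 0 ≤ J0 α t i)
    (hN0 : ∀ α, 0 ≤ N0 α)
    (S J : (α : X) → ℝ → Fin (d α) → ℝ) (N : X → ℝ → ℝ)
    (hsol : IsGenRFESol d G K S0 J0 N0 S J N)
    -- `∫₀^∞ e_α^⊤ J_α⁰(r) dr ≤ N_α⁰`
    (hJ0bound : ∀ α, ∫⁻ r in Set.Ici (0:ℝ), ENNReal.ofReal (∑ i, J0 α r i)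
        ≤ ENNReal.ofReal (N0 α))
    -- `∫₀^∞ [e_α^⊤ K_α(r)]_j dr ≤ 1`
    (hKbound : ∀ α (j : Fin (d α)),
        ∫⁻ r in Set.Ici (0:ℝ), ENNReal.ofReal (∑ i, K α r i j) ≤ 1) :
    ∀ α t, 0 ≤ t → 0 ≤ N α t :=
  genRFE_positivity_general d G K S0 J0 N0 hKloc hKnn hN0 S J N hsol hJ0bound hKbound
end

section
/- Suppose that for all compartments α, β ∈ X the kernels satisfy G_{αβ} ∈ L¹_loc(ℝ₊; ℝ₊^{|β|×|α|}) and K_α ∈ L¹_loc(ℝ₊; ℝ₊^{|α|×|α|}), and the forcing functions satisfy S_α⁰, J_α⁰ ∈ L¹_loc(ℝ₊; ℝ₊^{|α|}), and let (N_α, S_α, J_α) be the unique solution of the generalized RFE system. Assume that for all α ∈ X and almost all t ≥ 0: Σ_{α∈X} e_α^⊤(S_α⁰(t) − J_α⁰(t)) = 0 and Σ_{β∈X∖{α}} e_β^⊤ G_{αβ}(t) = e_α^⊤ K_α(t). Then the total mass is conserved: Σ_{α∈X} N_α(t) = Σ_{α∈X} N_α⁰ for all t ≥ 0. -/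
open MeasureTheory Matrix

private lemma pi_integrable {n : ℕ} {μ : Measure ℝ} {f : ℝ → Fin n → ℝ}
    (h : ∀ i, Integrable (fun u => f u i) μ) : Integrable f μ := by
  have hf : f = fun u => ∑ i, (f u i) • (Pi.single i 1 : Fin n → ℝ) := by
    funext u k
    simp [Pi.single_apply, Finset.sum_ite_eq]
  rw [hf]
  exact integrable_finset_sum _ fun i _ => (h i).smul_const _

private lemma integral_eval {n : ℕ} {μ : Measure ℝ} {f : ℝ → Fin n → ℝ}
    (h : Integrable f μ) (i : Fin n) : (∫ u, f u ∂μ) i = ∫ u, f u i ∂μ := by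
  have := (ContinuousLinearMap.proj (R := ℝ) (φ := fun _ : Fin n => ℝ) i).integral_comp_comm h
  simpa using this.symm

private lemma ae_reflect {P : ℝ → Prop}
    (hP : ∀ᵐ x ∂(volume : Measure ℝ), P x) (s : ℝ) :
    ∀ᵐ u ∂(volume : Measure ℝ), P (s - u) :=
  (Measure.measurePreserving_sub_left volume s).quasiMeasurePreserving.ae hP

private lemma ae_conv_integrable (g h : ℝ → ℝ)
    (hg : LocallyIntegrableOn g (Set.Ici 0))
    (hh : LocallyIntegrableOn h (Set.Ici 0)) :
    ∀ᵐ s ∂(volume.restrict (Set.Ici (0:ℝ))),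
      IntegrableOn (fun u => g (s - u) * h u) (Set.Ioc 0 s) := by
  rw [ae_restrict_iff' measurableSet_Ici]
  have key : ∀ T : ℕ, ∀ᵐ s ∂(volume : Measure ℝ),
      s ∈ Set.Icc (0:ℝ) T → IntegrableOn (fun u => g (s - u) * h u) (Set.Ioc 0 s) := by
    intro T
    have hg' : Integrable ((Set.Icc (0:ℝ) T).indicator g) := by
      rw [integrable_indicator_iff measurableSet_Icc]
      exact hg.integrableOn_compact_subset (Set.Icc_subset_Ici_self) isCompact_Icc
    have hh' : Integrable ((Set.Icc (0:ℝ) T).indicator h) := by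
      rw [integrable_indicator_iff measurableSet_Icc]
      exact hh.integrableOn_compact_subset (Set.Icc_subset_Ici_self) isCompact_Icc
    have hconv := hh'.ae_convolution_exists (L := ContinuousLinearMap.mul ℝ ℝ) hg'
    filter_upwards [hconv] with s hs hsmem
    have h1 : Integrable (fun u => ((Set.Icc (0:ℝ) T).indicator h u)
        * ((Set.Icc (0:ℝ) T).indicator g (s - u))) := hs
    refine (h1.integrableOn).congr_fun ?_ measurableSet_Ioc
    intro u hu
    obtain ⟨hu1, hu2⟩ := hu
    have hsT : s ≤ T := hsmem.2
    have h2 : (Set.Icc (0:ℝ) T).indicator h u = h u :=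
      Set.indicator_of_mem (Set.mem_Icc.2 ⟨hu1.le, hu2.trans hsT⟩) h
    have h3 : (Set.Icc (0:ℝ) T).indicator g (s - u) = g (s - u) :=
      Set.indicator_of_mem (Set.mem_Icc.2 ⟨by linarith, by linarith⟩) g
    simp only [h2, h3, mul_comm]
  filter_upwards [ae_all_iff.2 key] with s hs hs0
  exact hs (⌈s⌉₊) ⟨hs0, Nat.le_ceil s⟩

set_option maxHeartbeats 1000000 in
/-- **Conservation of mass for the generalized RFE system.**
If `∑_α e_α^⊤ (S_α⁰(t) − J_α⁰(t)) = 0` and `∑_{β ≠ α} e_β^⊤ G_{αβ}(t) = e_α^⊤ K_α(t)`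
(for a.e. `t ≥ 0`), then the total mass is conserved:
`∑_α N_α(t) = ∑_α N_α⁰` for all `t ≥ 0`. -/
theorem genRFE_conservation {X : Type*} [Fintype X] [DecidableEq X] (d : X → ℕ)
    (G : (α β : X) → ℝ → Matrix (Fin (d β)) (Fin (d α)) ℝ)
    (K : (α : X) → ℝ → Matrix (Fin (d α)) (Fin (d α)) ℝ)
    (S0 J0 : (α : X) → ℝ → Fin (d α) → ℝ)
    (N0 : X → ℝ)
    (hGloc : ∀ α β i j, LocallyIntegrableOn (fun t => G α β t i j) (Set.Ici 0))
    (hGnn : ∀ α β t, 0 ≤ t → ∀ i j, 0 ≤ G α β t i j)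
    (hKloc : ∀ α i j, LocallyIntegrableOn (fun t => K α t i j) (Set.Ici 0))
    (hKnn : ∀ α t, 0 ≤ t → ∀ i j, 0 ≤ K α t i j)
    (hS0loc : ∀ α i, LocallyIntegrableOn (fun t => S0 α t i) (Set.Ici 0))
    (hS0nn : ∀ α t, 0 ≤ t → ∀ i, 0 ≤ S0 α t i)
    (hJ0loc : ∀ α i, LocallyIntegrableOn (fun t => J0 α t i) (Set.Ici 0))
    (hJ0nn : ∀ α t, 0 ≤ t → ∀ i, 0 ≤ J0 α t i)
    (hN0 : ∀ α, 0 ≤ N0 α)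
    (S J : (α : X) → ℝ → Fin (d α) → ℝ) (N : X → ℝ → ℝ)
    (hsol : IsGenRFESol d G K S0 J0 N0 S J N)
    -- `∑_{α ∈ X} e_α^⊤ (S_α⁰(t) − J_α⁰(t)) = 0`
    (hforcing : ∀ᵐ t ∂(volume.restrict (Set.Ici (0:ℝ))),
        ∑ α, ((∑ i, S0 α t i) - (∑ i, J0 α t i)) = 0)
    -- `∑_{β ∈ X ∖ {α}} e_β^⊤ G_{αβ}(t) = e_α^⊤ K_α(t)`
    (hkernels : ∀ α, ∀ᵐ t ∂(volume.restrict (Set.Ici (0:ℝ))),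
        ∀ k : Fin (d α),
          ∑ β ∈ Finset.univ.erase α, ∑ j, G α β t j k = ∑ i, K α t i k) :
    ∀ t, 0 ≤ t → ∑ α, N α t = ∑ α, N0 α := by
  obtain ⟨hSloc, hJloc, hSnn, hJnn, hSeq, hJeq, hN0eq, hNeq⟩ := hsol
  -- reflected kernel identity, w.r.t. the plain Lebesgue measure
  have hker' : ∀ β : X, ∀ᵐ τ ∂(volume : Measure ℝ), τ ∈ Set.Ici (0:ℝ) →
      ∀ k : Fin (d β), ∑ α ∈ Finset.univ.erase β, ∑ j, G β α τ j k = ∑ i, K β τ i k :=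
    fun β => (ae_restrict_iff' measurableSet_Ici).1 (hkernels β)
  -- a.e. integrability of the convolution slices
  have hGint : ∀ᵐ s ∂(volume.restrict (Set.Ici (0:ℝ))),
      ∀ (β α : X) (i : Fin (d α)) (j : Fin (d β)),
        IntegrableOn (fun u => G β α (s - u) i j * S β u j) (Set.Ioc 0 s) :=
    ae_all_iff.2 fun β => ae_all_iff.2 fun α => ae_all_iff.2 fun i => ae_all_iff.2 fun j =>
      ae_conv_integrable (fun τ => G β α τ i j) (fun u => S β u j) (hGloc β α i j) (hSloc β j)
  have hKint : ∀ᵐ s ∂(volume.restrict (Set.Ici (0:ℝ))),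
      ∀ (α : X) (i j : Fin (d α)),
        IntegrableOn (fun u => K α (s - u) i j * S α u j) (Set.Ioc 0 s) :=
    ae_all_iff.2 fun α => ae_all_iff.2 fun i => ae_all_iff.2 fun j =>
      ae_conv_integrable (fun τ => K α τ i j) (fun u => S α u j) (hKloc α i j) (hSloc α j)
  -- the main a.e. identity: total flux vanishes
  have hF0 : ∀ᵐ s ∂(volume.restrict (Set.Ici (0:ℝ))),
      ∑ α, ((∑ i, S α s i) - (∑ i, J α s i)) = 0 := by
    filter_upwards [hGint, hKint, ae_all_iff.2 hSeq, ae_all_iff.2 hJeq, hforcing,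
      ae_restrict_mem measurableSet_Ici] with s hGi hKi hSs hJs hf0 hs0
    have hs0' : (0:ℝ) ≤ s := hs0
    have hGc : ∀ (β α : X) (i : Fin (d α)),
        IntegrableOn (fun u => (G β α (s - u)).mulVec (S β u) i) (Set.Ioc 0 s) := by
      intro β α i
      have e : (fun u => (G β α (s - u)).mulVec (S β u) i)
          = fun u => ∑ j, G β α (s - u) i j * S β u j := by
        funext u; simp [Matrix.mulVec, dotProduct]
      rw [e]
      exact integrable_finset_sum _ fun j _ => hGi β α i j
    have hKc : ∀ (α : X) (i : Fin (d α)),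
        IntegrableOn (fun u => (K α (s - u)).mulVec (S α u) i) (Set.Ioc 0 s) := by
      intro α i
      have e : (fun u => (K α (s - u)).mulVec (S α u) i)
          = fun u => ∑ j, K α (s - u) i j * S α u j := by
        funext u; simp [Matrix.mulVec, dotProduct]
      rw [e]
      exact integrable_finset_sum _ fun j _ => hKi α i j
    have hGvec : ∀ β α : X,
        IntegrableOn (fun u => (G β α (s - u)).mulVec (S β u)) (Set.Ioc 0 s) :=
      fun β α => pi_integrable fun i => hGc β α i
    have hKvec : ∀ α : X,
        IntegrableOn (fun u => (K α (s - u)).mulVec (S α u)) (Set.Ioc 0 s) :=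
      fun α => pi_integrable fun i => hKc α i
    -- componentwise form of the S-equation
    have hSsum : ∀ α, ∑ i, S α s i = (∑ i, S0 α s i)
        + ∑ β ∈ Finset.univ.erase α,
            ∫ u in Set.Ioc (0:ℝ) s, ∑ i, (G β α (s - u)).mulVec (S β u) i := by
      intro α
      have e1 : ∀ i, S α s i = S0 α s i + ∑ β ∈ Finset.univ.erase α,
          (∫ u in (0:ℝ)..s, (G β α (s - u)).mulVec (S β u)) i := by
        intro i; rw [hSs α]; simp
      rw [Finset.sum_congr rfl fun i _ => e1 i, Finset.sum_add_distrib]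
      congr 1
      rw [Finset.sum_comm]
      refine Finset.sum_congr rfl fun β _ => ?_
      calc ∑ i, (∫ u in (0:ℝ)..s, (G β α (s - u)).mulVec (S β u)) i
          = ∑ i, (∫ u in Set.Ioc (0:ℝ) s, (G β α (s - u)).mulVec (S β u)) i := by
            rw [intervalIntegral.integral_of_le hs0']
        _ = ∑ i, ∫ u in Set.Ioc (0:ℝ) s, (G β α (s - u)).mulVec (S β u) i :=
            Finset.sum_congr rfl fun i _ => integral_eval (hGvec β α) i
        _ = ∫ u in Set.Ioc (0:ℝ) s, ∑ i, (G β α (s - u)).mulVec (S β u) i :=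
            (integral_finset_sum _ fun i _ => hGc β α i).symm
    -- componentwise form of the J-equation
    have hJsum : ∀ α, ∑ i, J α s i = (∑ i, J0 α s i)
        + ∫ u in Set.Ioc (0:ℝ) s, ∑ i, (K α (s - u)).mulVec (S α u) i := by
      intro α
      have e1 : ∀ i, J α s i = J0 α s i
          + (∫ u in (0:ℝ)..s, (K α (s - u)).mulVec (S α u)) i := by
        intro i; rw [hJs α]; simp
      rw [Finset.sum_congr rfl fun i _ => e1 i, Finset.sum_add_distrib]
      congr 1
      calc ∑ i, (∫ u in (0:ℝ)..s, (K α (s - u)).mulVec (S α u)) i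
          = ∑ i, (∫ u in Set.Ioc (0:ℝ) s, (K α (s - u)).mulVec (S α u)) i := by
            rw [intervalIntegral.integral_of_le hs0']
        _ = ∑ i, ∫ u in Set.Ioc (0:ℝ) s, (K α (s - u)).mulVec (S α u) i :=
            Finset.sum_congr rfl fun i _ => integral_eval (hKvec α) i
        _ = ∫ u in Set.Ioc (0:ℝ) s, ∑ i, (K α (s - u)).mulVec (S α u) i :=
            (integral_finset_sum _ fun i _ => hKc α i).symm
    -- the key cancellation
    have key : ∑ α, ∑ β ∈ Finset.univ.erase α,
          (∫ u in Set.Ioc (0:ℝ) s, ∑ i, (G β α (s - u)).mulVec (S β u) i)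
        = ∑ α, ∫ u in Set.Ioc (0:ℝ) s, ∑ i, (K α (s - u)).mulVec (S α u) i := by
      have swap := Finset.sum_comm' (s := (Finset.univ : Finset X))
        (t := fun α => Finset.univ.erase α) (t' := (Finset.univ : Finset X))
        (s' := fun β => Finset.univ.erase β)
        (h := fun x y => by simp [Finset.mem_erase, ne_comm])
        (f := fun α β => ∫ u in Set.Ioc (0:ℝ) s, ∑ i, (G β α (s - u)).mulVec (S β u) i)
      rw [swap]
      refine Finset.sum_congr rfl fun β _ => ?_
      have hint : ∀ α' ∈ Finset.univ.erase β,
          Integrable (fun u => ∑ i, (G β α' (s - u)).mulVec (S β u) i)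
            (volume.restrict (Set.Ioc 0 s)) :=
        fun α' _ => integrable_finset_sum _ fun i _ => hGc β α' i
      rw [← integral_finset_sum _ hint]
      refine setIntegral_congr_ae measurableSet_Ioc ?_
      filter_upwards [ae_reflect (hker' β) s] with u hk hu
      have hτ : s - u ∈ Set.Ici (0:ℝ) := by
        simp only [Set.mem_Ici, sub_nonneg]; exact hu.2
      have hk' := hk hτ
      simp only [Matrix.mulVec, dotProduct]
      calc ∑ α' ∈ Finset.univ.erase β, ∑ i, ∑ k, G β α' (s - u) i k * S β u k
          = ∑ α' ∈ Finset.univ.erase β, ∑ k, (∑ i, G β α' (s - u) i k) * S β u k := by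
            refine Finset.sum_congr rfl fun α' _ => ?_
            simp only [Finset.sum_mul]
            exact Finset.sum_comm
        _ = ∑ k, (∑ α' ∈ Finset.univ.erase β, ∑ i, G β α' (s - u) i k) * S β u k := by
            simp only [Finset.sum_mul]
            exact Finset.sum_comm
        _ = ∑ k, (∑ i, K β (s - u) i k) * S β u k := by
            refine Finset.sum_congr rfl fun k _ => ?_
            rw [hk' k]
        _ = ∑ i, ∑ k, K β (s - u) i k * S β u k := by
            simp only [Finset.sum_mul]
            exact Finset.sum_comm
    calc ∑ α, ((∑ i, S α s i) - ∑ i, J α s i)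
        = ∑ α, (((∑ i, S0 α s i) - ∑ i, J0 α s i)
            + ((∑ β ∈ Finset.univ.erase α,
                ∫ u in Set.Ioc (0:ℝ) s, ∑ i, (G β α (s - u)).mulVec (S β u) i)
              - ∫ u in Set.Ioc (0:ℝ) s, ∑ i, (K α (s - u)).mulVec (S α u) i)) := by
          refine Finset.sum_congr rfl fun α _ => ?_
          rw [hSsum α, hJsum α]; ring
      _ = (∑ α, ((∑ i, S0 α s i) - ∑ i, J0 α s i))
          + ((∑ α, ∑ β ∈ Finset.univ.erase α,
              ∫ u in Set.Ioc (0:ℝ) s, ∑ i, (G β α (s - u)).mulVec (S β u) i)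
            - ∑ α, ∫ u in Set.Ioc (0:ℝ) s, ∑ i, (K α (s - u)).mulVec (S α u) i) := by
          simp only [Finset.sum_add_distrib, Finset.sum_sub_distrib]
      _ = 0 := by rw [hf0, key, sub_self, add_zero]
  -- conclude
  intro t ht
  have hII : ∀ α, IntervalIntegrable (fun u => (∑ i, S α u i) - ∑ i, J α u i) volume 0 t := by
    intro α
    rw [intervalIntegrable_iff_integrableOn_Ioc_of_le ht]
    refine Integrable.sub ?_ ?_ <;>
      refine integrable_finset_sum _ fun i _ => ?_
    · exact ((hSloc α i).integrableOn_compact_subset Set.Icc_subset_Ici_self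
        isCompact_Icc).mono_set Set.Ioc_subset_Icc_self
    · exact ((hJloc α i).integrableOn_compact_subset Set.Icc_subset_Ici_self
        isCompact_Icc).mono_set Set.Ioc_subset_Icc_self
  have hint0 : ∫ u in (0:ℝ)..t, ∑ α, ((∑ i, S α u i) - ∑ i, J α u i) = 0 := by
    rw [intervalIntegral.integral_of_le ht]
    refine integral_eq_zero_of_ae ?_
    exact ae_restrict_of_ae_restrict_of_subset
      (fun x hx => le_of_lt hx.1) hF0
  calc ∑ α, N α t
      = ∑ α, (N0 α + ∫ u in (0:ℝ)..t, ((∑ i, S α u i) - ∑ i, J α u i)) :=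
        Finset.sum_congr rfl fun α _ => hNeq α t ht
    _ = (∑ α, N0 α) + ∑ α, ∫ u in (0:ℝ)..t, ((∑ i, S α u i) - ∑ i, J α u i) :=
        Finset.sum_add_distrib
    _ = ∑ α, N0 α := by
        rw [← intervalIntegral.integral_finset_sum fun α _ => hII α, hint0, add_zero]
end

section
/- Let n(t) ∈ ℝ₊^{Ω} solve the linear ODE dn/dt = A n with n(0) = n⁰, and set N_α(t) = Σ_{j∈α} n_j(t). Then {N_α} satisfies the generalized RFE system, where the fluxes are given by S_α(t) = Σ_{β∈X∖{α}} A_{αβ} n_β(t) and (J_α(t))_i = (n_α(t))_i · Σ_{β∈X∖{α}} (e_β^⊤ A_{βα})_i for i ∈ α, the kernels are G_{βα}(t) = A_{αβ} exp(t A_{ββ}) and (K_α(t))_{ij} = Σ_{β∈X∖{α}} (e_β^⊤ A_{βα})_i (exp(t A_{αα}))_{ij} for i, j ∈ α, and the forcing functions are S_α⁰(t) = Σ_{β∈X∖{α}} G_{βα}(t) n_β⁰ and J_α⁰(t) = K_α(t) n_α⁰. -/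
open MeasureTheory Matrix NormedSpace

variable {Ω X : Type*}

/-- The block `A_{αβ}` of a matrix `A : ℝ^{Ω×Ω}` with respect to the partition of `Ω`
into the fibers of `π : Ω → X` (rows indexed by the compartment `α`, columns by `β`). -/
def blockM [DecidableEq X] (A : Matrix Ω Ω ℝ) (π : Ω → X) (α β : X) :
    Matrix {i : Ω // π i = α} {j : Ω // π j = β} ℝ :=
  fun i j => A i.1 j.1

/-!
Inside a compartment `α` the restriction `n_α` solves `n_α' = A_{αα} n_α + S_α`, the inflow from
the other compartments acting as a source term, so Duhamel's formula expresses `n_α` through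
`exp (t A_{αα})`, `n_α⁰` and `S_α`. Applying `A_{αβ}`, respectively multiplying by the exit
rates, turns this into the renewal equations for `S` and `J`. Since the columns of `A` sum to
zero, the column sums of `A_{αα}` are minus the exit rates, which gives `N_α' = e^⊤ S_α - e^⊤ J_α`.
-/

section Duhamel

variable {ι κ : Type*} [Fintype ι] [Fintype κ]

attribute [local instance] Matrix.linftyOpNormedAddCommGroup Matrix.linftyOpNormedSpace
  Matrix.linftyOpNormedRing Matrix.linftyOpNormedAlgebra

theorem HasDerivAt.matrix_mulVec {M : ℝ → Matrix κ ι ℝ} {M' : Matrix κ ι ℝ}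
    {v : ℝ → ι → ℝ} {v' : ι → ℝ} {x : ℝ} (hM : HasDerivAt M M' x) (hv : HasDerivAt v v' x) :
    HasDerivAt (fun y => M y *ᵥ v y) (M x *ᵥ v' + M' *ᵥ v x) x := by
  simpa using (Matrix.mulVecBilin ℝ ℝ).toContinuousBilinearMap.hasDerivAt_of_bilinear
    (fun _ => hM) (fun _ => hv)

theorem Matrix.mulVec_intervalIntegral (C : Matrix κ ι ℝ) {g : ℝ → ι → ℝ} {a b : ℝ}
    (hg : IntervalIntegrable g volume a b) :
    C *ᵥ ∫ s in a..b, g s = ∫ s in a..b, C *ᵥ g s :=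
  (LinearMap.toContinuousLinearMap C.mulVecLin).intervalIntegral_comp_comm hg |>.symm

variable [DecidableEq ι]

theorem hasDerivAt_exp_sub_smul (B : Matrix ι ι ℝ) (t s : ℝ) :
    HasDerivAt (fun u : ℝ => exp ((t - u) • B)) (-(exp ((t - s) • B) * B)) s := by
  have h := (hasDerivAt_exp_smul_const B (t - s)).scomp s ((hasDerivAt_id s).const_sub t)
  rw [neg_one_smul] at h
  exact h

theorem intervalIntegrable_exp_sub_smul_mulVec (B : Matrix ι ι ℝ) {f : ℝ → ι → ℝ}
    (hf : Continuous f) (t a b : ℝ) :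
    IntervalIntegrable (fun s => exp ((t - s) • B) *ᵥ f s) volume a b :=
  have hexp : Continuous fun s : ℝ => exp ((t - s) • B) :=
    continuous_iff_continuousAt.2 fun s => (hasDerivAt_exp_sub_smul B t s).continuousAt
  (hexp.matrix_mulVec hf).intervalIntegrable a b

/-- Duhamel's formula for `m' = B m + f`: `s ↦ exp((t - s) B) m(s)` has derivative
`exp((t - s) B) f(s)`. -/
theorem eq_exp_smul_mulVec_add_integral {B : Matrix ι ι ℝ} {m f : ℝ → ι → ℝ}
    (hf : Continuous f) (hm : ∀ t, HasDerivAt m (B *ᵥ m t + f t) t) (t : ℝ) :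
    m t = exp (t • B) *ᵥ m 0 + ∫ s in (0:ℝ)..t, exp ((t - s) • B) *ᵥ f s := by
  have hderiv : ∀ s, HasDerivAt (fun u => exp ((t - u) • B) *ᵥ m u)
      (exp ((t - s) • B) *ᵥ f s) s := fun s => by
    convert (hasDerivAt_exp_sub_smul B t s).matrix_mulVec (hm s) using 1
    rw [mulVec_add, neg_mulVec, ← mulVec_mulVec]
    abel
  rw [intervalIntegral.integral_eq_sub_of_hasDerivAt (fun s _ => hderiv s)
    (intervalIntegrable_exp_sub_smul_mulVec B hf t 0 t)]
  simp

theorem mulVec_eq_exp_smul_mulVec_add_integral (C : Matrix κ ι ℝ) {B : Matrix ι ι ℝ}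
    {m f : ℝ → ι → ℝ} (hf : Continuous f) (hm : ∀ t, HasDerivAt m (B *ᵥ m t + f t) t)
    (t : ℝ) :
    C *ᵥ m t = (C * exp (t • B)) *ᵥ m 0 + ∫ s in (0:ℝ)..t, (C * exp ((t - s) • B)) *ᵥ f s := by
  rw [eq_exp_smul_mulVec_add_integral hf hm t, mulVec_add, mulVec_mulVec,
    C.mulVec_intervalIntegral (intervalIntegrable_exp_sub_smul_mulVec B hf t 0 t)]
  simp only [mulVec_mulVec]

end Duhamel

section Compartments

variable [Fintype Ω] [Fintype X] [DecidableEq X]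

theorem mulVec_apply_eq_blockM_add_sum (A : Matrix Ω Ω ℝ) (π : Ω → X) (v : Ω → ℝ) {α : X}
    (i : {i : Ω // π i = α}) :
    (A *ᵥ v) i.1 = (blockM A π α α *ᵥ fun j => v j.1) i +
      ∑ β ∈ Finset.univ.erase α, (blockM A π α β *ᵥ fun j => v j.1) i := by
  simp only [mulVec, dotProduct, blockM]
  rw [← Fintype.sum_fiberwise π, ← Finset.add_sum_erase _ _ (Finset.mem_univ α)]

/-- `∑_{β ≠ α} (e_β^⊤ A_{βα})_j`: the rate at which mass leaves compartment `α` from state `j`. -/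
def exitRate (A : Matrix Ω Ω ℝ) (π : Ω → X) (α : X) (j : {j : Ω // π j = α}) : ℝ :=
  ∑ β ∈ Finset.univ.erase α, ∑ k : {k : Ω // π k = β}, A k.1 j.1

theorem sum_blockM_apply_eq_neg_exitRate {A : Matrix Ω Ω ℝ} (hcolsum : ∀ j, ∑ i, A i j = 0)
    (π : Ω → X) {α : X} (j : {j : Ω // π j = α}) :
    ∑ i, blockM A π α α i j = -exitRate A π α j := by
  rw [eq_neg_iff_add_eq_zero, exitRate]
  change ∑ i : {i : Ω // π i = α}, A i.1 j.1 + _ = 0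
  rw [Finset.add_sum_erase _ (fun β => ∑ k : {k : Ω // π k = β}, A k.1 j.1) (Finset.mem_univ α),
    Fintype.sum_fiberwise π fun k => A k j.1]
  exact hcolsum j

theorem sum_blockM_mulVec_eq_neg {A : Matrix Ω Ω ℝ} (hcolsum : ∀ j, ∑ i, A i j = 0)
    (π : Ω → X) {α : X} (v : {j : Ω // π j = α} → ℝ) :
    ∑ i, (blockM A π α α *ᵥ v) i = -∑ j, exitRate A π α j * v j := by
  simp only [mulVec, dotProduct]
  rw [Finset.sum_comm]
  simp only [← Finset.sum_mul, sum_blockM_apply_eq_neg_exitRate hcolsum, neg_mul,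
    Finset.sum_neg_distrib]

end Compartments

theorem ode_to_genRFE_general [Fintype Ω] [DecidableEq Ω] [Fintype X] [DecidableEq X]
    (A : Matrix Ω Ω ℝ) (π : Ω → X)
    (hcolsum : ∀ j, ∑ i, A i j = 0)
    (n : ℝ → Ω → ℝ) (n0 : Ω → ℝ)
    (hODE : ∀ i t, HasDerivAt (fun s => n s i) (A.mulVec (n t) i) t)
    (hinit : n 0 = n0)
    -- the compartment concentrations
    (N : X → ℝ → ℝ) (hN : ∀ α t, N α t = ∑ i : {i : Ω // π i = α}, n t i.1)
    -- the fluxes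
    (S J : (α : X) → ℝ → {i : Ω // π i = α} → ℝ)
    (hS : ∀ α t, S α t = ∑ β ∈ Finset.univ.erase α,
        (blockM A π α β).mulVec (fun j => n t j.1))
    (hJ : ∀ α t i, J α t i = n t i.1 *
        ∑ β ∈ Finset.univ.erase α, ∑ k : {k : Ω // π k = β}, A k.1 i.1)
    -- the kernels
    (G : (β α : X) → ℝ → Matrix {i : Ω // π i = α} {j : Ω // π j = β} ℝ)
    (hG : ∀ β α t, G β α t = blockM A π α β * exp (t • blockM A π β β))
    (K : (α : X) → ℝ → Matrix {i : Ω // π i = α} {i : Ω // π i = α} ℝ)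
    (hK : ∀ α t i j, K α t i j = ∑ β ∈ Finset.univ.erase α,
        (∑ k : {k : Ω // π k = β}, A k.1 i.1) * exp (t • blockM A π α α) i j)
    -- the forcing functions
    (S0 J0 : (α : X) → ℝ → {i : Ω // π i = α} → ℝ)
    (hS0 : ∀ α t, S0 α t = ∑ β ∈ Finset.univ.erase α,
        (G β α t).mulVec (fun j => n0 j.1))
    (hJ0 : ∀ α t, J0 α t = (K α t).mulVec (fun i => n0 i.1)) :
    -- conclusion: the generalized RFE system holds
    (∀ α t, 0 ≤ t → S α t = S0 α t + ∑ β ∈ Finset.univ.erase α,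
        ∫ s in (0:ℝ)..t, (G β α (t - s)).mulVec (S β s)) ∧
    (∀ α t, 0 ≤ t → J α t = J0 α t +
        ∫ s in (0:ℝ)..t, (K α (t - s)).mulVec (S α s)) ∧
    (∀ α t, HasDerivAt (N α) ((∑ i, S α t i) - (∑ i, J α t i)) t) ∧
    (∀ α, N α 0 = ∑ i : {i : Ω // π i = α}, n0 i.1) := by
  have hn_cont : Continuous n :=
    continuous_pi fun j => continuous_iff_continuousAt.2 fun t => (hODE j t).continuousAt
  have hS_cont : ∀ α, Continuous (S α) := fun α => by
    rw [funext (hS α)]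
    exact continuous_finsetSum _ fun β _ =>
      continuous_const.matrix_mulVec (continuous_pi fun j => (continuous_apply j.1).comp hn_cont)
  have hn_block : ∀ α t, HasDerivAt (fun s (j : {j : Ω // π j = α}) => n s j.1)
      (blockM A π α α *ᵥ (fun j => n t j.1) + S α t) t := fun α t =>
    hasDerivAt_pi.2 fun i => by
      simpa only [Pi.add_apply, hS, Finset.sum_apply, ← mulVec_apply_eq_blockM_add_sum]
        using hODE i.1 t
  refine ⟨fun α t _ => ?_, fun α t _ => ?_, fun α t => ?_, fun α => by rw [hN, hinit]⟩
  · rw [hS, hS0, ← Finset.sum_add_distrib]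
    refine Finset.sum_congr rfl fun β _ => ?_
    simp only [hG, ← hinit]
    exact mulVec_eq_exp_smul_mulVec_add_integral _ (hS_cont β) (hn_block β) t
  · have hJ_diag : ∀ t, J α t = diagonal (exitRate A π α) *ᵥ fun i => n t i.1 :=
      fun t => funext fun i => by rw [hJ, mulVec_diagonal, mul_comm]; rfl
    have hK_diag : ∀ t, K α t = diagonal (exitRate A π α) * exp (t • blockM A π α α) :=
      fun t => by ext i j; rw [hK, diagonal_mul, exitRate, Finset.sum_mul]
    simp only [hJ_diag, hJ0, hK_diag, ← hinit]
    exact mulVec_eq_exp_smul_mulVec_add_integral _ (hS_cont α) (hn_block α) t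
  · rw [funext (hN α)]
    refine (HasDerivAt.fun_sum fun i _ => hasDerivAt_pi.1 (hn_block α t) i).congr_deriv ?_
    simp only [Pi.add_apply, Finset.sum_add_distrib, sum_blockM_mulVec_eq_neg hcolsum, hJ,
      exitRate, mul_comm]
    ring

/-- **Reduction of a linear ODE system to the generalized RFE system.**
If `n(t)` solves `dn/dt = A n`, `n(0) = n⁰`, where `A` has nonnegative off-diagonal entries
and zero column sums, then the compartment concentrations `N_α(t) = ∑_{j∈α} n_j(t)` satisfy
the generalized RFE system with fluxes `S_α(t) = ∑_{β≠α} A_{αβ} n_β(t)`,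
`(J_α(t))_i = (n_α(t))_i ∑_{β≠α} (e_β^⊤ A_{βα})_i`, kernels `G_{βα}(t) = A_{αβ} e^{tA_{ββ}}`,
`(K_α(t))_{ij} = ∑_{β≠α} (e_β^⊤ A_{βα})_i (e^{tA_{αα}})_{ij}` and forcing functions
`S_α⁰(t) = ∑_{β≠α} G_{βα}(t) n_β⁰`, `J_α⁰(t) = K_α(t) n_α⁰`. -/
theorem ode_to_genRFE [Fintype Ω] [DecidableEq Ω] [Fintype X] [DecidableEq X]
    (A : Matrix Ω Ω ℝ) (π : Ω → X)
    (hoffdiag : ∀ i j, i ≠ j → 0 ≤ A i j)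
    (hcolsum : ∀ j, ∑ i, A i j = 0)
    (n : ℝ → Ω → ℝ) (n0 : Ω → ℝ)
    (hODE : ∀ i t, HasDerivAt (fun s => n s i) (A.mulVec (n t) i) t)
    (hinit : n 0 = n0)
    (hnonneg : ∀ t, 0 ≤ t → ∀ i, 0 ≤ n t i)
    -- the compartment concentrations
    (N : X → ℝ → ℝ) (hN : ∀ α t, N α t = ∑ i : {i : Ω // π i = α}, n t i.1)
    -- the fluxes
    (S J : (α : X) → ℝ → {i : Ω // π i = α} → ℝ)
    (hS : ∀ α t, S α t = ∑ β ∈ Finset.univ.erase α,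
        (blockM A π α β).mulVec (fun j => n t j.1))
    (hJ : ∀ α t i, J α t i = n t i.1 *
        ∑ β ∈ Finset.univ.erase α, ∑ k : {k : Ω // π k = β}, A k.1 i.1)
    -- the kernels
    (G : (β α : X) → ℝ → Matrix {i : Ω // π i = α} {j : Ω // π j = β} ℝ)
    (hG : ∀ β α t, G β α t = blockM A π α β * exp (t • blockM A π β β))
    (K : (α : X) → ℝ → Matrix {i : Ω // π i = α} {i : Ω // π i = α} ℝ)
    (hK : ∀ α t i j, K α t i j = ∑ β ∈ Finset.univ.erase α,
        (∑ k : {k : Ω // π k = β}, A k.1 i.1) * exp (t • blockM A π α α) i j)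
    -- the forcing functions
    (S0 J0 : (α : X) → ℝ → {i : Ω // π i = α} → ℝ)
    (hS0 : ∀ α t, S0 α t = ∑ β ∈ Finset.univ.erase α,
        (G β α t).mulVec (fun j => n0 j.1))
    (hJ0 : ∀ α t, J0 α t = (K α t).mulVec (fun i => n0 i.1)) :
    -- conclusion: the generalized RFE system holds
    (∀ α t, 0 ≤ t → S α t = S0 α t + ∑ β ∈ Finset.univ.erase α,
        ∫ s in (0:ℝ)..t, (G β α (t - s)).mulVec (S β s)) ∧
    (∀ α t, 0 ≤ t → J α t = J0 α t +
        ∫ s in (0:ℝ)..t, (K α (t - s)).mulVec (S α s)) ∧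
    (∀ α t, HasDerivAt (N α) ((∑ i, S α t i) - (∑ i, J α t i)) t) ∧
    (∀ α, N α 0 = ∑ i : {i : Ω // π i = α}, n0 i.1) :=
  ode_to_genRFE_general A π hcolsum n n0 hODE hinit N hN S J hS hJ G hG K hK S0 J0 hS0 hJ0
end

section
/- Let n(t) ∈ ℝ₊^{Ω} solve the linear ODE dn/dt = A n with n(0) = n⁰, set N_α(t) = Σ_{j∈α} n_j(t), and define the individual fluxes I_{αβ}^{ij}(t) = λ_{ij} (n_α(t))_i for α ≠ β, i ∈ α, j ∈ β. Then: (1) (d/dt)N_α(t) = Σ_{i∈α} Σ_{β∈X∖{α}} Σ_{j∈β} I_{βα}^{ji}(t) − Σ_{i∈α} Σ_{β∈X∖{α}} Σ_{j∈β} I_{αβ}^{ij}(t); and (2) the fluxes satisfy the renewal equations I_{αβ}^{ij}(t) = Ī_{αβ}^{ij}(t) + Σ_{r∈α} Σ_{γ∈X∖{α}} Σ_{m∈γ} ∫₀ᵗ Ψ_{αβ}(t−s; r, i, j) I_{γα}^{mr}(s) ds, with kernels Ψ_{αβ}(t; r, i, j) = λ_{ij} (exp(t A_{αα}))_{ir}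 and forcing functions Ī_{αβ}^{ij}(t) = Σ_{r∈α} Ψ_{αβ}(t; r, i, j) (n_α⁰)_r. -/
open MeasureTheory Matrix NormedSpace

variable {Ω X : Type*}

/-! Restricted to a compartment `α`, the ODE reads `n_α' = A_{αα} n_α + f`, where `f` is the
inflow from the other compartments. Variation of constants gives
`n_α(t) = e^{tA_{αα}} n_α(0) + ∫₀ᵗ e^{(t-s)A_{αα}} f(s) ds`; multiplying the `i`-th entry by `λ_{ij}`
is the renewal equation, the inflow `f` being a sum of the individual fluxes into `α`.
The balance law for `N_α` holds because the columns of `A` sum to zero, so the part of `A n`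
internal to `α` sums to minus the outflow from `α`. -/

section MatrixExp

variable {m : Type*} [Fintype m] [DecidableEq m]

lemma hasDerivAt_exp_smul_apply (B : Matrix m m ℝ) (u : ℝ) (i r : m) :
    HasDerivAt (fun v : ℝ => exp (v • B) i r) ((exp (u • B) * B) i r) u := by
  let : NormedAddCommGroup (Matrix m m ℝ) := Matrix.linftyOpNormedAddCommGroup
  let : NormedRing (Matrix m m ℝ) := Matrix.linftyOpNormedRing
  let : NormedAlgebra ℝ (Matrix m m ℝ) := Matrix.linftyOpNormedAlgebra
  have : CompleteSpace (Matrix m m ℝ) := FiniteDimensional.complete ℝ _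
  let entry : Matrix m m ℝ →L[ℝ] ℝ :=
    LinearMap.toContinuousLinearMap (Matrix.entryLinearMap ℝ ℝ i r)
  exact entry.hasFDerivAt.comp_hasDerivAt u (hasDerivAt_exp_smul_const B u)

lemma continuous_exp_smul_apply (B : Matrix m m ℝ) (i r : m) :
    Continuous fun v : ℝ => exp (v • B) i r :=
  continuous_iff_continuousAt.2 fun u => (hasDerivAt_exp_smul_apply B u i r).continuousAt

theorem variation_of_constants (B : Matrix m m ℝ) {x f : ℝ → m → ℝ}
    (hx : ∀ k s, HasDerivAt (fun s => x s k) ((B *ᵥ x s) k + f s k) s)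
    (hf : ∀ k, Continuous fun s => f s k) (t : ℝ) (i : m) :
    x t i = (exp (t • B) *ᵥ x 0) i + ∫ s in (0:ℝ)..t, (exp ((t - s) • B) *ᵥ f s) i := by
  have hderiv : ∀ s, HasDerivAt (fun s => (exp ((t - s) • B) *ᵥ x s) i)
      ((exp ((t - s) • B) *ᵥ f s) i) s := by
    intro s
    have hE : ∀ r, HasDerivAt (fun v => exp ((t - v) • B) i r)
        (-(exp ((t - s) • B) * B) i r) s := fun r => by
      have h := (hasDerivAt_exp_smul_apply B (t - s) i r).comp s ((hasDerivAt_id s).const_sub t)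
      simp only [Function.comp_def, mul_neg, mul_one] at h
      exact h
    have hsum := HasDerivAt.fun_sum fun r (_ : r ∈ Finset.univ) => (hE r).mul (hx r s)
    refine hsum.congr_deriv ?_
    -- the terms `∓ e^{(t-s)B} B x` cancel
    have hcancel : ((exp ((t - s) • B) * B) *ᵥ x s) i = (exp ((t - s) • B) *ᵥ (B *ᵥ x s)) i := by
      rw [mulVec_mulVec]
    simp only [mulVec, dotProduct, mul_add, neg_mul, Finset.sum_add_distrib,
      Finset.sum_neg_distrib] at hcancel ⊢
    rw [hcancel]
    ring
  have hcont : Continuous fun s => (exp ((t - s) • B) *ᵥ f s) i := by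
    have hE : ∀ r, Continuous fun s => exp ((t - s) • B) i r := fun r =>
      (continuous_exp_smul_apply B i r).comp (continuous_sub_left t)
    exact continuous_finsetSum _ fun r _ => (hE r).mul (hf r)
  have hFTC := intervalIntegral.integral_eq_sub_of_hasDerivAt (fun s _ => hderiv s)
    (hcont.intervalIntegrable 0 t)
  simp only [sub_self, zero_smul, exp_zero, one_mulVec, sub_zero] at hFTC
  linarith

end MatrixExp

lemma Finset.sum_erase_sum_fiber {M : Type*} [AddCommGroup M] [Fintype Ω] [Fintype X]
    [DecidableEq X] (π : Ω → X) (α : X) (G : Ω → M) :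
    ∑ β ∈ Finset.univ.erase α, ∑ j : {j : Ω // π j = β}, G j
      = ∑ j : {j : Ω // π j ≠ α}, G j := by
  have hfiber := Finset.sum_erase_add _ (fun β => ∑ j : {j : Ω // π j = β}, G j) (mem_univ α)
  rw [Fintype.sum_fiberwise π G, ← Fintype.sum_subtype_add_sum_subtype (π · = α) G] at hfiber
  exact add_right_cancel (hfiber.trans (add_comm _ _))

section SubtypeSums

variable {R : Type*} [CommRing R] [Fintype Ω] (A : Matrix Ω Ω R) (p : Ω → Prop) [DecidablePred p]

lemma Matrix.mulVec_apply_eq_sum_subtype_add_sum_subtype (v : Ω → R) (i : Ω) :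
    (A *ᵥ v) i = ∑ j : {j // p j}, A i j * v j + ∑ j : {j // ¬ p j}, A i j * v j :=
  (Fintype.sum_subtype_add_sum_subtype p _).symm

lemma Matrix.sum_subtype_mulVec_of_sum_col_eq_zero (hA : ∀ j, ∑ i, A i j = 0) (v : Ω → R) :
    ∑ i : {i // p i}, (A *ᵥ v) i
      = ∑ i : {i // p i}, ∑ j : {j // ¬ p j}, A i j * v j
        - ∑ i : {i // p i}, ∑ j : {j // ¬ p j}, A j i * v i := by
  have hinternal : ∑ i : {i // p i}, ∑ j : {j // p j}, A i j * v j
      = -∑ j : {j // p j}, ∑ i : {i // ¬ p i}, A i j * v j := by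
    rw [Finset.sum_comm, ← Finset.sum_neg_distrib]
    refine Finset.sum_congr rfl fun j _ => ?_
    have hcol := Fintype.sum_subtype_add_sum_subtype p (A · j)
    rw [hA] at hcol
    rw [← Finset.sum_mul, ← Finset.sum_mul, ← neg_mul, eq_neg_of_add_eq_zero_left hcol]
  simp only [mulVec_apply_eq_sum_subtype_add_sum_subtype A p, Finset.sum_add_distrib, hinternal]
  abel

end SubtypeSums

section Compartments

variable [Fintype Ω] [DecidableEq X] (A : Matrix Ω Ω ℝ) (π : Ω → X)
  {n : ℝ → Ω → ℝ}

lemma hasDerivAt_sum_compartment (hA : ∀ j, ∑ i, A i j = 0)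
    (hODE : ∀ i t, HasDerivAt (fun s => n s i) ((A *ᵥ n t) i) t) (α : X) (t : ℝ) :
    HasDerivAt (fun s => ∑ i : {i : Ω // π i = α}, n s i)
      (∑ i : {i : Ω // π i = α}, ∑ j : {j : Ω // π j ≠ α}, A i j * n t j
        - ∑ i : {i : Ω // π i = α}, ∑ j : {j : Ω // π j ≠ α}, A j i * n t i) t :=
  (HasDerivAt.fun_sum fun (i : {i : Ω // π i = α}) _ => hODE i t).congr_deriv
    (sum_subtype_mulVec_of_sum_col_eq_zero A (π · = α) hA (n t))

lemma apply_eq_exp_blockM_add_sum_integral [DecidableEq Ω]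
    (hODE : ∀ i t, HasDerivAt (fun s => n s i) ((A *ᵥ n t) i) t) (α : X)
    (i : {i : Ω // π i = α}) (t : ℝ) :
    n t i = ∑ r : {r : Ω // π r = α}, exp (t • blockM A π α α) i r * n 0 r
      + ∑ r : {r : Ω // π r = α}, ∑ m : {m : Ω // π m ≠ α},
          ∫ s in (0:ℝ)..t, exp ((t - s) • blockM A π α α) i r * (A r m * n s m) := by
  set B := blockM A π α α
  have hn : ∀ k, Continuous fun s => n s k := fun k =>
    continuous_iff_continuousAt.2 fun s => (hODE k s).continuousAt
  have hterm : ∀ r (m : {m : Ω // π m ≠ α}),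
      Continuous fun s => exp ((t - s) • B) i r * (A r m * n s m) := fun r m =>
    ((continuous_exp_smul_apply B i r).comp (continuous_sub_left t)).mul
      (continuous_const.mul (hn m))
  have hx : ∀ r s, HasDerivAt (fun s => n s r.1)
      ((B *ᵥ fun k => n s k.1) r + ∑ m : {m : Ω // π m ≠ α}, A r m * n s m) s :=
    fun r s => (hODE r s).congr_deriv
      (mulVec_apply_eq_sum_subtype_add_sum_subtype A (π · = α) (n s) r)
  rw [variation_of_constants B hx
    (fun r => continuous_finsetSum _ fun m _ => continuous_const.mul (hn m)) t i]
  simp only [mulVec, dotProduct, Finset.mul_sum]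
  rw [intervalIntegral.integral_finsetSum fun r _ =>
    (continuous_finsetSum _ fun m _ => hterm r m).intervalIntegrable 0 t]
  congr 1
  exact Finset.sum_congr rfl fun r _ =>
    intervalIntegral.integral_finsetSum fun m _ => (hterm r m).intervalIntegrable 0 t

end Compartments

theorem ode_individual_fluxes_renewal_general [Fintype Ω] [DecidableEq Ω] [Fintype X] [DecidableEq X]
    (A : Matrix Ω Ω ℝ) (π : Ω → X)
    (hcolsum : ∀ j, ∑ i, A i j = 0)
    (n : ℝ → Ω → ℝ) (n0 : Ω → ℝ)
    (hODE : ∀ i t, HasDerivAt (fun s => n s i) (A.mulVec (n t) i) t)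
    (hinit : n 0 = n0)
    -- the compartment concentrations
    (N : X → ℝ → ℝ) (hN : ∀ α t, N α t = ∑ i : {i : Ω // π i = α}, n t i.1)
    -- the individual fluxes `I_{αβ}^{ij}(t) = λ_{ij} (n_α(t))_i`, `λ_{ij} = A_{ji}`
    (I : Ω → Ω → ℝ → ℝ) (hI : ∀ i j t, I i j t = A j i * n t i)
    -- the kernels `Ψ_{αβ}(t; r, i, j) = λ_{ij} (e^{tA_{αα}})_{ir}`
    (Ψ : (α β : X) → ℝ → {r : Ω // π r = α} → {i : Ω // π i = α} →
        {j : Ω // π j = β} → ℝ)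
    (hΨ : ∀ α β t r i j, Ψ α β t r i j = A j.1 i.1 * exp (t • blockM A π α α) i r)
    -- the forcing functions `Ī_{αβ}^{ij}(t) = ∑_{r∈α} Ψ_{αβ}(t;r,i,j)(n_α⁰)_r`
    (Ibar : (α β : X) → {i : Ω // π i = α} → {j : Ω // π j = β} → ℝ → ℝ)
    (hIbar : ∀ α β i j t, Ibar α β i j t = ∑ r : {r : Ω // π r = α}, Ψ α β t r i j * n0 r.1) :
    -- (1) evolution of the compartment concentrations
    (∀ α t, HasDerivAt (N α)
      ((∑ i : {i : Ω // π i = α}, ∑ β ∈ Finset.univ.erase α,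
          ∑ j : {j : Ω // π j = β}, I j.1 i.1 t) -
       (∑ i : {i : Ω // π i = α}, ∑ β ∈ Finset.univ.erase α,
          ∑ j : {j : Ω // π j = β}, I i.1 j.1 t)) t) ∧
    -- (2) the renewal equations for the individual fluxes
    (∀ (α β : X), α ≠ β → ∀ (i : {i : Ω // π i = α}) (j : {j : Ω // π j = β}) (t : ℝ),
      0 ≤ t →
      I i.1 j.1 t = Ibar α β i j t +
        ∑ r : {r : Ω // π r = α}, ∑ γ ∈ Finset.univ.erase α,
          ∑ m : {m : Ω // π m = γ},
            ∫ s in (0:ℝ)..t, Ψ α β (t - s) r i j * I m.1 r.1 s) := by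
  refine ⟨fun α t => ?_, fun α β _ i j t _ => ?_⟩
  · rw [show N α = fun s => ∑ i : {i : Ω // π i = α}, n s i from funext (hN α)]
    convert hasDerivAt_sum_compartment A π hcolsum hODE α t using 2 <;>
      refine Finset.sum_congr rfl fun i _ => ?_ <;> simp only [hI]
    · exact Finset.sum_erase_sum_fiber π α fun j => A i j * n t j
    · exact Finset.sum_erase_sum_fiber π α fun j => A j i * n t i
  · rw [hI, hIbar, apply_eq_exp_blockM_add_sum_integral A π hODE α i t, hinit]
    simp only [hΨ, hI, mul_add, Finset.mul_sum, ← intervalIntegral.integral_const_mul, mul_assoc]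
    congr 1
    exact Finset.sum_congr rfl fun r _ => (Finset.sum_erase_sum_fiber π α fun m =>
      ∫ s in (0:ℝ)..t, A j i * (exp ((t - s) • blockM A π α α) i r * (A r m * n s m))).symm

/-- **Individual fluxes of a compartmentalized linear ODE system satisfy renewal equations.**
Let `n(t)` solve `dn/dt = An`, `n(0) = n⁰`, set `N_α(t) = ∑_{j∈α} n_j(t)` and define the
individual fluxes `I_{αβ}^{ij}(t) = λ_{ij}(n_α(t))_i` (here `λ_{ij} = A_{ji}`). Then
(1) `dN_α/dt = ∑_{i∈α}∑_{β≠α}∑_{j∈β} I_{βα}^{ji} − ∑_{i∈α}∑_{β≠α}∑_{j∈β} I_{αβ}^{ij}`, and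
(2) the fluxes satisfy the renewal equations
`I_{αβ}^{ij}(t) = Ī_{αβ}^{ij}(t) + ∑_{r∈α}∑_{γ≠α}∑_{m∈γ} ∫₀ᵗ Ψ_{αβ}(t−s;r,i,j) I_{γα}^{mr}(s) ds`
with kernels `Ψ_{αβ}(t;r,i,j) = λ_{ij}(e^{tA_{αα}})_{ir}` and forcing functions
`Ī_{αβ}^{ij}(t) = ∑_{r∈α} Ψ_{αβ}(t;r,i,j)(n_α⁰)_r`. -/
theorem ode_individual_fluxes_renewal [Fintype Ω] [DecidableEq Ω] [Fintype X] [DecidableEq X]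
    (A : Matrix Ω Ω ℝ) (π : Ω → X)
    (hoffdiag : ∀ i j, i ≠ j → 0 ≤ A i j)
    (hcolsum : ∀ j, ∑ i, A i j = 0)
    (n : ℝ → Ω → ℝ) (n0 : Ω → ℝ)
    (hODE : ∀ i t, HasDerivAt (fun s => n s i) (A.mulVec (n t) i) t)
    (hinit : n 0 = n0)
    (hnonneg : ∀ t, 0 ≤ t → ∀ i, 0 ≤ n t i)
    -- the compartment concentrations
    (N : X → ℝ → ℝ) (hN : ∀ α t, N α t = ∑ i : {i : Ω // π i = α}, n t i.1)
    -- the individual fluxes `I_{αβ}^{ij}(t) = λ_{ij} (n_α(t))_i`, `λ_{ij} = A_{ji}`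
    (I : Ω → Ω → ℝ → ℝ) (hI : ∀ i j t, I i j t = A j i * n t i)
    -- the kernels `Ψ_{αβ}(t; r, i, j) = λ_{ij} (e^{tA_{αα}})_{ir}`
    (Ψ : (α β : X) → ℝ → {r : Ω // π r = α} → {i : Ω // π i = α} →
        {j : Ω // π j = β} → ℝ)
    (hΨ : ∀ α β t r i j, Ψ α β t r i j = A j.1 i.1 * exp (t • blockM A π α α) i r)
    -- the forcing functions `Ī_{αβ}^{ij}(t) = ∑_{r∈α} Ψ_{αβ}(t;r,i,j)(n_α⁰)_r`
    (Ibar : (α β : X) → {i : Ω // π i = α} → {j : Ω // π j = β} → ℝ → ℝ)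
    (hIbar : ∀ α β i j t, Ibar α β i j t = ∑ r : {r : Ω // π r = α}, Ψ α β t r i j * n0 r.1) :
    -- (1) evolution of the compartment concentrations
    (∀ α t, HasDerivAt (N α)
      ((∑ i : {i : Ω // π i = α}, ∑ β ∈ Finset.univ.erase α,
          ∑ j : {j : Ω // π j = β}, I j.1 i.1 t) -
       (∑ i : {i : Ω // π i = α}, ∑ β ∈ Finset.univ.erase α,
          ∑ j : {j : Ω // π j = β}, I i.1 j.1 t)) t) ∧
    -- (2) the renewal equations for the individual fluxes
    (∀ (α β : X), α ≠ β → ∀ (i : {i : Ω // π i = α}) (j : {j : Ω // π j = β}) (t : ℝ),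
      0 ≤ t →
      I i.1 j.1 t = Ibar α β i j t +
        ∑ r : {r : Ω // π r = α}, ∑ γ ∈ Finset.univ.erase α,
          ∑ m : {m : Ω // π m = γ},
            ∫ s in (0:ℝ)..t, Ψ α β (t - s) r i j * I m.1 r.1 s) :=
  ode_individual_fluxes_renewal_general A π hcolsum n n0 hODE hinit N hN I hI Ψ hΨ Ibar hIbar
end

section
/- Let A ∈ ℝ^{Ω×Ω} have nonnegative off-diagonal entries and columns summing to zero, and suppose A satisfies detailed balance: there exists μ ∈ ℝ^{Ω} with μ_j > 0 for all j and A_{ij} μ_j = A_{ji} μ_i for all i, j ∈ Ω. Let X be a partition of Ω such that every compartment has at most one entrance point. Then for all α, β ∈ X with α ≠ β whose entrance points i_α ∈ α, i_β ∈ β exist, the response function Φ_{βα}(t) = (A_{αβ} exp(t A_{ββ}))_{i_α, i_β} has the form Φ_{βα}(t) = λ_{i_β, i_α} Σ_{j∈β} κ_j² e^{−ν_j t} for some κ_j ≥ 0, ν_j ≥ 0 with Σ_{j∈β} κ_j² = 1, where λ_{i_β, i_α} = A_{i_α, i_β} ≥ 0; if one of the entrance points does not exist then Φ_{βα} ≡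 0. In particular, each Φ_{βα} is a completely monotone function on (0,∞). -/
open MeasureTheory Matrix NormedSpace

variable {Ω X : Type*}

/-- A state `i` is an entrance point of its compartment `π i` if some state of another
compartment jumps to `i` with positive rate. -/
def IsEntrance (A : Matrix Ω Ω ℝ) (π : Ω → X) (i : Ω) : Prop :=
  ∃ j, π j ≠ π i ∧ 0 < A i j

/-!
Since compartments have at most one entrance point and detailed balance makes positivity of
`A i j` symmetric, the row of `A_{αβ}` at `i_α` is supported at `i_β`, so
`Φ_{βα}(t) = A_{i_α i_β} (exp (t A_{ββ}))_{i_β i_β}`. Conjugating by `diag √μ` turns `A_{ββ}` into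
a symmetric matrix `S`; its eigenvalues are `≤ 0` by Gershgorin's theorem applied to `A_{ββ}ᵀ`,
whose row sums are `≤ 0`. The spectral theorem gives `exp (t S)_{ii} = ∑ₖ V_{ik}² e^{t λₖ}` with
`∑ₖ V_{ik}² = 1`, and a nonnegative combination of decaying exponentials is completely monotone.
-/

namespace Matrix

theorem mul_apply_eq_mul_of_forall_ne {l n o α : Type*} [Fintype n] [NonUnitalNonAssocSemiring α]
    {M : Matrix l n α} {N : Matrix n o α} {i : l} {k : n} (hM : ∀ j, j ≠ k → M i j = 0) (c : o) :
    (M * N) i c = M i k * N k c := by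
  rw [mul_apply, Finset.sum_eq_single k (fun j _ hj => by rw [hM j hj, zero_mul]) (by simp)]

variable {n : Type*} [Fintype n] [DecidableEq n]

-- By Gershgorin, every eigenvalue lies within `∑_{j ≠ i} M i j` of some `M i i`.
theorem nonpos_of_mem_spectrum {M : Matrix n n ℝ} (hoff : ∀ i j, i ≠ j → 0 ≤ M i j)
    (hrow : ∀ i, ∑ j, M i j ≤ 0) {c : ℝ} (hc : c ∈ spectrum ℝ M) : c ≤ 0 := by
  rw [← spectrum_toLin', ← Module.End.hasEigenvalue_iff_mem_spectrum] at hc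
  obtain ⟨k, hk⟩ := eigenvalue_mem_ball hc
  have hradius : ∑ j ∈ Finset.univ.erase k, ‖M k j‖ = ∑ j ∈ Finset.univ.erase k, M k j :=
    Finset.sum_congr rfl fun j hj =>
      Real.norm_of_nonneg (hoff k j (Finset.ne_of_mem_erase hj).symm)
  have hsum := Finset.add_sum_erase Finset.univ (M k) (Finset.mem_univ k)
  rw [Metric.mem_closedBall, Real.dist_eq, hradius] at hk
  linarith [le_abs_self (c - M k k), hrow k]

def diagonalUnit {K : Type*} [Field K] (p : n → K) (hp : ∀ i, p i ≠ 0) : (Matrix n n K)ˣ where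
  val := diagonal p
  inv := diagonal p⁻¹
  val_inv := by rw [diagonal_mul_diagonal, ← diagonal_one]; simp [hp]
  inv_val := by rw [diagonal_mul_diagonal, ← diagonal_one]; simp [hp]

theorem diagonalUnit_conj_apply_self {K : Type*} [Field K] (p : n → K) (hp : ∀ i, p i ≠ 0)
    (M : Matrix n n K) (i : n) :
    ((diagonalUnit p hp : Matrix n n K) * M * (↑(diagonalUnit p hp)⁻¹ : Matrix n n K)) i i =
      M i i := by
  change (diagonal p * M * diagonal p⁻¹) i i = M i i
  rw [mul_diagonal, diagonal_mul, Pi.inv_apply, mul_comm (p i), mul_assoc, mul_inv_cancel₀ (hp i),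
    mul_one]

theorem IsHermitian.exp_smul {S : Matrix n n ℝ} (hS : S.IsHermitian) (t : ℝ) :
    NormedSpace.exp (t • S) = (hS.eigenvectorUnitary : Matrix n n ℝ) *
      diagonal (fun k => Real.exp (t * hS.eigenvalues k)) *
        star (hS.eigenvectorUnitary : Matrix n n ℝ) := by
  have hS' : IsSelfAdjoint S := hS
  -- the CFC lemma needs a matrix norm; any norm inducing the product topology will do
  open scoped Matrix.Norms.L2Operator in
  rw [← CFC.real_exp_eq_normedSpace_exp ((IsSelfAdjoint.all t).smul hS'),
    ← cfc_comp_smul t Real.exp S, hS.cfc_eq, IsHermitian.cfc, Unitary.conjStarAlgAut_apply]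
  rfl

theorem IsHermitian.exp_smul_apply_self {S : Matrix n n ℝ} (hS : S.IsHermitian) (t : ℝ) (i : n) :
    NormedSpace.exp (t • S) i i =
      ∑ k, (hS.eigenvectorUnitary : Matrix n n ℝ) i k ^ 2 * Real.exp (t * hS.eigenvalues k) := by
  rw [hS.exp_smul, mul_apply]
  refine Finset.sum_congr rfl fun k _ => ?_
  rw [mul_diagonal, star_apply, star_trivial]
  ring

theorem IsHermitian.sum_eigenvectorUnitary_sq {S : Matrix n n ℝ} (hS : S.IsHermitian) (i : n) :
    ∑ k, (hS.eigenvectorUnitary : Matrix n n ℝ) i k ^ 2 = 1 := by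
  have h := congrFun (congrFun (Unitary.coe_mul_star_self hS.eigenvectorUnitary) i) i
  rw [mul_apply, one_apply_eq] at h
  simpa [sq] using h

theorem isHermitian_diagonal_inv_mul_mul_diagonal {B : Matrix n n ℝ} {p : n → ℝ}
    (hp : ∀ i, p i ≠ 0) (hdb : ∀ i j, B i j * p j ^ 2 = B j i * p i ^ 2) :
    (diagonal p⁻¹ * B * diagonal p).IsHermitian := by
  ext i j
  simp only [conjTranspose_apply, star_trivial, mul_diagonal, diagonal_mul, Pi.inv_apply]
  field_simp [hp i, hp j]
  linear_combination -hdb i j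

theorem exp_smul_apply_self_eq_sum_exp (B : Matrix n n ℝ) (μ : n → ℝ) (hμ : ∀ i, 0 < μ i)
    (hoff : ∀ i j, i ≠ j → 0 ≤ B i j) (hcol : ∀ j, ∑ i, B i j ≤ 0)
    (hdb : ∀ i j, B i j * μ j = B j i * μ i) (i : n) :
    ∃ κ ν : n → ℝ, (∀ k, 0 ≤ κ k) ∧ (∀ k, 0 ≤ ν k) ∧ ∑ k, κ k ^ 2 = 1 ∧
      ∀ t : ℝ, NormedSpace.exp (t • B) i i = ∑ k, κ k ^ 2 * Real.exp (-ν k * t) := by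
  set p : n → ℝ := fun i => √(μ i)
  have hp : ∀ i, p i ≠ 0 := fun i => (Real.sqrt_pos.2 (hμ i)).ne'
  set u := diagonalUnit p hp
  set S : Matrix n n ℝ := (↑u⁻¹ : Matrix n n ℝ) * B * (↑u : Matrix n n ℝ)
  have hS : S.IsHermitian := isHermitian_diagonal_inv_mul_mul_diagonal hp fun i j => by
    simp only [p, Real.sq_sqrt (hμ _).le]
    exact hdb i j
  have hB : ∀ t : ℝ, t • B = (u : Matrix n n ℝ) * (t • S) * (↑u⁻¹ : Matrix n n ℝ) := fun t => by
    simp [S, mul_assoc]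
  have hev : ∀ k, hS.eigenvalues k ≤ 0 := by
    intro k
    -- being symmetric, `S` is also similar to `Bᵀ`, whose rows are the columns of `B`
    have hST : S = (u : Matrix n n ℝ) * Bᵀ * (↑u⁻¹ : Matrix n n ℝ) := by
      conv_lhs => rw [← hS.eq, conjTranspose_eq_transpose_of_trivial]
      change (diagonal p⁻¹ * B * diagonal p)ᵀ = _
      rw [transpose_mul, transpose_mul, diagonal_transpose, diagonal_transpose, mul_assoc]
      rfl
    have hspec : spectrum ℝ S = spectrum ℝ Bᵀ := by rw [hST, spectrum.units_conjugate]
    exact nonpos_of_mem_spectrum (fun i j hij => hoff j i hij.symm) hcol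
      (hspec ▸ hS.eigenvalues_mem_spectrum_real k)
  refine ⟨fun k => |(hS.eigenvectorUnitary : Matrix n n ℝ) i k|, fun k => -hS.eigenvalues k,
    fun k => abs_nonneg _, fun k => neg_nonneg.2 (hev k), ?_, fun t => ?_⟩
  · simpa only [sq_abs] using hS.sum_eigenvectorUnitary_sq i
  · rw [hB, exp_units_conj, diagonalUnit_conj_apply_self, hS.exp_smul_apply_self]
    simp only [sq_abs, neg_neg, mul_comm t]

end Matrix

theorem iteratedDeriv_sum_mul_exp {ι : Type*} [Fintype ι] (c d : ι → ℝ) (n : ℕ) (t : ℝ) :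
    iteratedDeriv n (fun s => ∑ j, c j * Real.exp (d j * s)) t =
      ∑ j, c j * (d j ^ n * Real.exp (d j * t)) := by
  rw [iteratedDeriv_fun_sum fun j _ => by fun_prop]
  simp only [iteratedDeriv_const_mul_field, iteratedDeriv_exp_const_mul]

theorem neg_one_pow_mul_iteratedDeriv_sum_exp_nonneg {ι : Type*} [Fintype ι] {c ν : ι → ℝ}
    (hc : ∀ j, 0 ≤ c j) (hν : ∀ j, 0 ≤ ν j) (n : ℕ) (t : ℝ) :
    0 ≤ (-1) ^ n * iteratedDeriv n (fun s => ∑ j, c j * Real.exp (-ν j * s)) t := by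
  rw [iteratedDeriv_sum_mul_exp, Finset.mul_sum]
  refine Finset.sum_nonneg fun j _ => ?_
  have hsign : (-1 : ℝ) ^ n * (-ν j) ^ n = ν j ^ n := by rw [← mul_pow, neg_one_mul, neg_neg]
  calc (0 : ℝ) ≤ c j * ν j ^ n * Real.exp (-ν j * t) := by have := hc j; have := hν j; positivity
    _ = (-1) ^ n * (c j * ((-ν j) ^ n * Real.exp (-ν j * t))) := by rw [← hsign]; ring

section Compartments

variable {A : Matrix Ω Ω ℝ} {π : Ω → X}

theorem apply_eq_zero_of_not_isEntrance_left (hoff : ∀ i j, i ≠ j → 0 ≤ A i j) {i j : Ω}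
    (hij : π j ≠ π i) (hi : ¬ IsEntrance A π i) : A i j = 0 :=
  le_antisymm (not_lt.1 fun h => hi ⟨j, hij, h⟩) (hoff i j fun h => hij (h ▸ rfl))

theorem apply_eq_zero_of_not_isEntrance_right (hoff : ∀ i j, i ≠ j → 0 ≤ A i j) {μ : Ω → ℝ}
    (hμ : ∀ i, 0 < μ i) (hdb : ∀ i j, A i j * μ j = A j i * μ i) {i j : Ω}
    (hij : π j ≠ π i) (hj : ¬ IsEntrance A π j) : A i j = 0 := by
  have hdb' := hdb i j
  rw [apply_eq_zero_of_not_isEntrance_left hoff hij.symm hj, zero_mul] at hdb'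
  exact (mul_eq_zero.1 hdb').resolve_right (hμ j).ne'

theorem sum_blockM_self_nonpos [Fintype Ω] [DecidableEq X] (hoff : ∀ i j, i ≠ j → 0 ≤ A i j)
    (hcol : ∀ j, ∑ i, A i j ≤ 0) (β : X) (j : {j : Ω // π j = β}) :
    ∑ i, blockM A π β β i j ≤ 0 := by
  have hout : 0 ≤ ∑ i : {i : Ω // ¬ π i = β}, A i j :=
    Finset.sum_nonneg fun i _ => hoff i j fun h => i.2 (h ▸ j.2)
  have hsplit := Fintype.sum_subtype_add_sum_subtype (fun i => π i = β) (fun i => A i j)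
  exact le_trans (le_add_of_nonneg_right hout) (hsplit ▸ hcol j)

end Compartments

theorem detailed_balance_response_completely_monotone_general
    [Fintype Ω] [DecidableEq Ω] [DecidableEq X]
    (A : Matrix Ω Ω ℝ) (π : Ω → X)
    (hoffdiag : ∀ i j, i ≠ j → 0 ≤ A i j)
    (hcolsum : ∀ j, ∑ i, A i j = 0)
    (μ : Ω → ℝ) (hμpos : ∀ j, 0 < μ j)
    (hdb : ∀ i j, A i j * μ j = A j i * μ i)
    (hone : ∀ i i', π i = π i' → IsEntrance A π i → IsEntrance A π i' → i = i') :
    (∀ (α β : X), α ≠ β →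
      ∀ (iα : {i : Ω // π i = α}) (iβ : {j : Ω // π j = β}),
        IsEntrance A π iα.1 → IsEntrance A π iβ.1 →
        (∃ κ ν : {j : Ω // π j = β} → ℝ,
          (∀ j, 0 ≤ κ j) ∧ (∀ j, 0 ≤ ν j) ∧ (∑ j, κ j ^ 2) = 1 ∧
          (∀ t : ℝ, 0 ≤ t →
            (blockM A π α β * NormedSpace.exp (t • blockM A π β β)) iα iβ =
              A iα.1 iβ.1 * ∑ j, κ j ^ 2 * Real.exp (-(ν j) * t))) ∧
        -- complete monotonicity of `t ↦ Φ_{βα}(t)` on `(0,∞)`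
        (∀ (n : ℕ) (t : ℝ), 0 < t →
          0 ≤ (-1 : ℝ) ^ n *
            iteratedDeriv n
              (fun s => (blockM A π α β * NormedSpace.exp (s • blockM A π β β)) iα iβ) t)) ∧
    -- if the entrance point of a compartment does not exist, the kernel vanishes
    (∀ (α β : X), α ≠ β →
      ∀ (iα : {i : Ω // π i = α}), ¬ IsEntrance A π iα.1 →
        ∀ (iβ : {j : Ω // π j = β}) (t : ℝ),
          (blockM A π α β * NormedSpace.exp (t • blockM A π β β)) iα iβ = 0) := by
  refine ⟨fun α β hαβ iα iβ _ hβ => ?_, fun α β hαβ iα hα iβ t => ?_⟩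
  · have hrow : ∀ j, j ≠ iβ → blockM A π α β iα j = 0 := fun j hj =>
      apply_eq_zero_of_not_isEntrance_right hoffdiag hμpos hdb (by rw [j.2, iα.2]; exact hαβ.symm)
        fun hj' => hj (Subtype.ext (hone _ _ (j.2.trans iβ.2.symm) hj' hβ))
    obtain ⟨κ, ν, hκ, hν, hκsum, hexp⟩ := exp_smul_apply_self_eq_sum_exp (blockM A π β β)
      (fun j => μ j) (fun j => hμpos j) (fun i j hij => hoffdiag i j (Subtype.val_injective.ne hij))
      (sum_blockM_self_nonpos hoffdiag (fun j => (hcolsum j).le) β) (fun i j => hdb i j) iβ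
    have hΦ : ∀ s : ℝ, (blockM A π α β * exp (s • blockM A π β β)) iα iβ =
        ∑ j, A iα iβ * κ j ^ 2 * Real.exp (-ν j * s) := fun s => by
      rw [mul_apply_eq_mul_of_forall_ne hrow, hexp, Finset.mul_sum]
      simp only [mul_assoc]
      rfl
    refine ⟨⟨κ, ν, hκ, hν, hκsum, fun t _ => by rw [hΦ, Finset.mul_sum]; simp only [mul_assoc]⟩,
      fun n t _ => ?_⟩
    have hA : 0 ≤ A iα iβ := hoffdiag _ _ fun h => hαβ (iα.2.symm.trans (h ▸ iβ.2))
    simp only [hΦ]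
    exact neg_one_pow_mul_iteratedDeriv_sum_exp_nonneg
      (fun j => mul_nonneg hA (sq_nonneg (κ j))) hν n t
  · exact Finset.sum_eq_zero fun j _ => mul_eq_zero_of_left
      (apply_eq_zero_of_not_isEntrance_left hoffdiag (by rw [j.2, iα.2]; exact hαβ.symm) hα) _

/-- **Response functions of detailed-balance systems are completely monotone.**
If `A` has nonnegative off-diagonal entries, zero column sums, and satisfies detailed
balance (`A_{ij}μ_j = A_{ji}μ_i` for a positive vector `μ`), and every compartment of the
partition has at most one entrance point, then for `α ≠ β` with entrance points
`i_α ∈ α`, `i_β ∈ β` the response function `Φ_{βα}(t) = (A_{αβ}e^{tA_{ββ}})_{i_α,i_β}`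
has the form `λ_{i_β,i_α} ∑_{j∈β} κ_j² e^{−ν_j t}` with `κ_j, ν_j ≥ 0`, `∑κ_j² = 1`,
`λ_{i_β,i_α} = A_{i_α,i_β} ≥ 0`; if an entrance point does not exist the kernel vanishes
identically. In particular each `Φ_{βα}` is completely monotone on `(0,∞)`. -/
theorem detailed_balance_response_completely_monotone
    [Fintype Ω] [DecidableEq Ω] [Fintype X] [DecidableEq X]
    (A : Matrix Ω Ω ℝ) (π : Ω → X)
    (hoffdiag : ∀ i j, i ≠ j → 0 ≤ A i j)
    (hcolsum : ∀ j, ∑ i, A i j = 0)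
    (μ : Ω → ℝ) (hμpos : ∀ j, 0 < μ j) (hμsum : ∑ j, μ j = 1)
    (hdb : ∀ i j, A i j * μ j = A j i * μ i)
    (hone : ∀ i i', π i = π i' → IsEntrance A π i → IsEntrance A π i' → i = i') :
    (∀ (α β : X), α ≠ β →
      ∀ (iα : {i : Ω // π i = α}) (iβ : {j : Ω // π j = β}),
        IsEntrance A π iα.1 → IsEntrance A π iβ.1 →
        (∃ κ ν : {j : Ω // π j = β} → ℝ,
          (∀ j, 0 ≤ κ j) ∧ (∀ j, 0 ≤ ν j) ∧ (∑ j, κ j ^ 2) = 1 ∧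
          (∀ t : ℝ, 0 ≤ t →
            (blockM A π α β * NormedSpace.exp (t • blockM A π β β)) iα iβ =
              A iα.1 iβ.1 * ∑ j, κ j ^ 2 * Real.exp (-(ν j) * t))) ∧
        -- complete monotonicity of `t ↦ Φ_{βα}(t)` on `(0,∞)`
        (∀ (n : ℕ) (t : ℝ), 0 < t →
          0 ≤ (-1 : ℝ) ^ n *
            iteratedDeriv n
              (fun s => (blockM A π α β * NormedSpace.exp (s • blockM A π β β)) iα iβ) t)) ∧
    -- if the entrance point of a compartment does not exist, the kernel vanishes
    (∀ (α β : X), α ≠ β →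
      ∀ (iα : {i : Ω // π i = α}), ¬ IsEntrance A π iα.1 →
        ∀ (iβ : {j : Ω // π j = β}) (t : ℝ),
          (blockM A π α β * NormedSpace.exp (t • blockM A π β β)) iα iβ = 0) :=
  detailed_balance_response_completely_monotone_general A π hoffdiag hcolsum μ hμpos hdb hone
end

section
/- Let A ∈ ℝ^{Ω×Ω} have nonnegative off-diagonal entries and columns summing to zero, let X be a partition of Ω, and suppose that for every β ∈ X the initial datum of the ODE dn/dt = An admits the representation n_β⁰ = ∫_{(−∞,0]} exp(−ξ A_{ββ}) m_β(dξ), where m_β is a vector of finite nonnegative Borel measures on (−∞,0] (one per state in β). Then the forcing function S_α⁰(t) = Σ_{β∈X∖{α}} A_{αβ} exp(t A_{ββ}) n_β⁰ of the generalized RFE associated to the ODE admits, for every t ≥ 0, the representation S_α⁰(t) = Σ_{β∈X∖{α}} ∫_{(−∞,0]} G_{βα}(t−ξ) m_β(dξ), where G_{βα}(s) = A_{αβ} exp(s A_{ββ}); consequently the generalized RFE for N_α(t) = Σ_{j∈α} n_j(t) can be reformulated as a structured population system with an age variable. -/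
/-!
Fix `β ≠ α` and write `C = A_{ββ}`. Inserting the representation of `n_β⁰` and using linearity
of the integral together with `e^{tC} e^{-ξC} = e^{(t-ξ)C}` gives the claim term by term, provided
the entries of `ξ ↦ e^{-ξC}` are integrable on `(−∞,0]` (otherwise the Bochner integrals are junk).
They are bounded there: `C` has nonnegative off-diagonal entries and nonpositive column sums, so
for `s ≥ 0` and `c` large, `e^{sC} = e^{-sc} e^{s(C + c)}` with `C + c` entrywise nonnegative with
column sums at most `c`; comparing exponential series, `e^{sC}` is nonnegative with column sums
at most `e^{-sc} e^{sc} = 1`.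
-/

open MeasureTheory Matrix NormedSpace
open scoped Nat

variable {Ω X : Type*}

namespace Matrix

theorem mulVec_sum_integral {ι κ ν α : Type*} [Fintype κ] [Fintype ν] [MeasurableSpace α]
    (P : Matrix ι κ ℝ) (F : α → Matrix κ ν ℝ) (μ : ν → Measure α)
    (hF : ∀ j k, Integrable (fun ξ => F ξ j k) (μ k)) (i : ι) :
    (P *ᵥ fun j => ∑ k, ∫ ξ, F ξ j k ∂μ k) i = ∑ k, ∫ ξ, (P * F ξ) i k ∂μ k := by
  simp only [mulVec, dotProduct, mul_apply, Finset.mul_sum]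
  rw [Finset.sum_comm]
  refine Finset.sum_congr rfl fun k _ => ?_
  rw [integral_finsetSum _ fun j _ => (hF j k).const_mul _]
  simp only [integral_const_mul]

section

variable {κ : Type*} [Fintype κ] [DecidableEq κ]

section ExpSeries

open scoped Matrix.Norms.Operator

theorem hasSum_exp_apply (M : Matrix κ κ ℝ) (i j : κ) :
    HasSum (fun k : ℕ => (k ! : ℝ)⁻¹ * (M ^ k) i j) (exp M i j) :=
  Pi.hasSum.mp (Pi.hasSum.mp (exp_series_hasSum_exp' (𝕂 := ℝ) M) i) j

theorem exp_smul_one (c : ℝ) : exp (c • (1 : Matrix κ κ ℝ)) = Real.exp c • 1 := by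
  have := (algebraMap_exp_comm (𝔸 := Matrix κ κ ℝ) c).symm
  rwa [Algebra.algebraMap_eq_smul_one, Algebra.algebraMap_eq_smul_one, ← Real.exp_eq_exp_ℝ]
    at this

theorem continuous_exp_smul_apply (M : Matrix κ κ ℝ) (i j : κ) :
    Continuous fun s : ℝ => exp (s • M) i j :=
  (continuous_apply_apply i j).comp
    ((exp_continuous (𝔸 := Matrix κ κ ℝ)).comp (continuous_id.smul continuous_const))

end ExpSeries

theorem exp_eq_exp_neg_smul_exp_add_smul_one (M : Matrix κ κ ℝ) (c : ℝ) :
    exp M = Real.exp (-c) • exp (M + c • 1) := by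
  have hcomm : Commute (M + c • 1) ((-c) • (1 : Matrix κ κ ℝ)) :=
    ((Commute.one_right _).smul_right _)
  rw [← smul_one_mul, ← exp_smul_one, ← exp_add_of_commute _ _ hcomm.symm]
  simp

theorem sum_pow_apply_le {N : Matrix κ κ ℝ} (hN : ∀ i j, 0 ≤ N i j) {c : ℝ} (hc₀ : 0 ≤ c)
    (hc : ∀ j, ∑ i, N i j ≤ c) (k : ℕ) (j : κ) : ∑ i, (N ^ k) i j ≤ c ^ k := by
  induction k generalizing j with
  | zero => simp [one_apply]
  | succ k ih =>
    calc ∑ i, (N ^ (k + 1)) i j = ∑ l, (∑ i, N i l) * (N ^ k) l j := by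
          simp only [pow_succ', mul_apply, Finset.sum_mul]
          exact Finset.sum_comm
      _ ≤ ∑ l, c * (N ^ k) l j :=
          Finset.sum_le_sum fun l _ =>
            mul_le_mul_of_nonneg_right (hc l) (pow_apply_nonneg hN k l j)
      _ ≤ c ^ (k + 1) := by
          rw [← Finset.mul_sum, pow_succ']
          exact mul_le_mul_of_nonneg_left (ih j) hc₀

theorem exp_apply_nonneg_of_nonneg {N : Matrix κ κ ℝ} (hN : ∀ i j, 0 ≤ N i j) (i j : κ) :
    0 ≤ exp N i j :=
  (hasSum_exp_apply N i j).nonneg fun k => mul_nonneg (by positivity) (pow_apply_nonneg hN k i j)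

theorem sum_exp_apply_le_of_nonneg {N : Matrix κ κ ℝ} (hN : ∀ i j, 0 ≤ N i j) {c : ℝ}
    (hc₀ : 0 ≤ c) (hc : ∀ j, ∑ i, N i j ≤ c) (j : κ) : ∑ i, exp N i j ≤ Real.exp c := by
  have hexp : HasSum (fun k : ℕ => (k ! : ℝ)⁻¹ * c ^ k) (Real.exp c) := by
    simpa [Real.exp_eq_exp_ℝ] using exp_series_hasSum_exp' (𝕂 := ℝ) c
  refine hasSum_le (fun k => ?_) (hasSum_sum fun i _ => hasSum_exp_apply N i j) hexp
  rw [← Finset.mul_sum]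
  exact mul_le_mul_of_nonneg_left (sum_pow_apply_le hN hc₀ hc k j) (by positivity)

theorem add_smul_one_apply_nonneg {M : Matrix κ κ ℝ} (hM : ∀ i j, i ≠ j → 0 ≤ M i j) (i j : κ) :
    0 ≤ (M + (∑ l, |M l l|) • 1) i j := by
  rcases eq_or_ne i j with rfl | hij
  · have : -M i i ≤ ∑ l, |M l l| :=
      (neg_le_abs _).trans
        (Finset.single_le_sum (fun l _ => abs_nonneg (M l l)) (Finset.mem_univ i))
    simp only [add_apply, smul_apply, one_apply_eq, smul_eq_mul, mul_one]
    linarith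
  · simpa [one_apply_ne hij] using hM i j hij

theorem exp_apply_nonneg {M : Matrix κ κ ℝ} (hM : ∀ i j, i ≠ j → 0 ≤ M i j) (i j : κ) :
    0 ≤ exp M i j := by
  rw [exp_eq_exp_neg_smul_exp_add_smul_one M (∑ l, |M l l|), smul_apply, smul_eq_mul]
  exact mul_nonneg (Real.exp_pos _).le
    (exp_apply_nonneg_of_nonneg (add_smul_one_apply_nonneg hM) i j)

theorem sum_exp_apply_le_one {M : Matrix κ κ ℝ} (hM : ∀ i j, i ≠ j → 0 ≤ M i j)
    (hcol : ∀ j, ∑ i, M i j ≤ 0) (j : κ) : ∑ i, exp M i j ≤ 1 := by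
  set c := ∑ l, |M l l|
  have hc : ∀ j, ∑ i, (M + c • 1) i j ≤ c := fun j => by
    simp [Finset.sum_add_distrib, one_apply, hcol j]
  rw [exp_eq_exp_neg_smul_exp_add_smul_one M c]
  simp only [smul_apply, smul_eq_mul, ← Finset.mul_sum]
  calc Real.exp (-c) * ∑ i, exp (M + c • 1) i j ≤ Real.exp (-c) * Real.exp c :=
        mul_le_mul_of_nonneg_left (sum_exp_apply_le_of_nonneg (add_smul_one_apply_nonneg hM)
          (by positivity) hc j) (Real.exp_pos _).le
    _ = 1 := by rw [← Real.exp_add, neg_add_cancel, Real.exp_zero]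

theorem abs_exp_apply_le_one {M : Matrix κ κ ℝ} (hM : ∀ i j, i ≠ j → 0 ≤ M i j)
    (hcol : ∀ j, ∑ i, M i j ≤ 0) (i j : κ) : |exp M i j| ≤ 1 := by
  rw [abs_of_nonneg (exp_apply_nonneg hM i j)]
  exact (Finset.single_le_sum (fun l _ => exp_apply_nonneg hM l j) (Finset.mem_univ i)).trans
    (sum_exp_apply_le_one hM hcol j)

theorem abs_exp_smul_apply_le_one {M : Matrix κ κ ℝ} (hM : ∀ i j, i ≠ j → 0 ≤ M i j)
    (hcol : ∀ j, ∑ i, M i j ≤ 0) {s : ℝ} (hs : 0 ≤ s) (i j : κ) : |exp (s • M) i j| ≤ 1 :=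
  abs_exp_apply_le_one (fun i j hij => mul_nonneg hs (hM i j hij))
    (fun j => by simpa only [smul_apply, smul_eq_mul, ← Finset.mul_sum] using
      mul_nonpos_of_nonneg_of_nonpos hs (hcol j)) i j

theorem integrableOn_exp_neg_smul_apply {M : Matrix κ κ ℝ} (hM : ∀ i j, i ≠ j → 0 ≤ M i j)
    (hcol : ∀ j, ∑ i, M i j ≤ 0) (μ : Measure ℝ) [IsFiniteMeasure μ] (i j : κ) :
    IntegrableOn (fun ξ => exp ((-ξ) • M) i j) (Set.Iic 0) μ := by
  refine Measure.integrableOn_of_bounded (M := 1) (measure_ne_top μ _)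
    ((continuous_exp_smul_apply M i j).comp continuous_neg).aestronglyMeasurable ?_
  filter_upwards [ae_restrict_mem measurableSet_Iic] with ξ hξ
  exact abs_exp_smul_apply_le_one hM hcol (neg_nonneg.mpr hξ) i j

end

end Matrix

theorem blockM_apply_nonneg_of_ne [DecidableEq X] {A : Matrix Ω Ω ℝ}
    (hA : ∀ i j, i ≠ j → 0 ≤ A i j) (π : Ω → X) (β : X) (p q : {j : Ω // π j = β})
    (hpq : p ≠ q) : 0 ≤ blockM A π β β p q :=
  hA p q (Subtype.coe_ne_coe.mpr hpq)

theorem sum_blockM_apply_nonpos [Fintype Ω] [DecidableEq X] {A : Matrix Ω Ω ℝ}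
    (hA : ∀ i j, i ≠ j → 0 ≤ A i j) (hcol : ∀ j, ∑ i, A i j = 0) (π : Ω → X) (β : X)
    (q : {j : Ω // π j = β}) : ∑ p, blockM A π β β p q ≤ 0 := by
  calc ∑ p, blockM A π β β p q = ∑ i ∈ Finset.univ.filter (π · = β), A i q :=
        (Finset.sum_subtype _ (fun i => by simp) fun i => A i q).symm
    _ ≤ ∑ i, A i q := Finset.sum_le_sum_of_subset_of_nonneg (Finset.filter_subset _ _)
        fun i _ hi => hA i q fun h => by simp [h, q.2] at hi
    _ = 0 := hcol q

theorem ode_initial_data_age_structure_general [Fintype Ω] [DecidableEq Ω] [Fintype X] [DecidableEq X]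
    (A : Matrix Ω Ω ℝ) (π : Ω → X)
    (hoffdiag : ∀ i j, i ≠ j → 0 ≤ A i j)
    (hcolsum : ∀ j, ∑ i, A i j = 0)
    (n0 : Ω → ℝ)
    -- `m_β`: vectors of finite nonnegative measures supported on `(−∞,0]`
    (m : (β : X) → {j : Ω // π j = β} → Measure ℝ)
    (hm_fin : ∀ β j, IsFiniteMeasure (m β j))
    -- the representation `n_β⁰ = ∫_{(−∞,0]} e^{−ξ A_{ββ}} m_β(dξ)` (entrywise)
    (hrep : ∀ (β : X) (i : {i : Ω // π i = β}),
        n0 i.1 = ∑ j : {j : Ω // π j = β},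
          ∫ ξ in Set.Iic (0:ℝ), exp ((-ξ) • blockM A π β β) i j ∂(m β j)) :
    -- the representation of the forcing function `S_α⁰`
    ∀ (α : X) (t : ℝ), 0 ≤ t → ∀ i : {i : Ω // π i = α},
      (∑ β ∈ Finset.univ.erase α,
        (blockM A π α β * exp (t • blockM A π β β)).mulVec (fun j => n0 j.1) i) =
      ∑ β ∈ Finset.univ.erase α, ∑ j : {j : Ω // π j = β},
        ∫ ξ in Set.Iic (0:ℝ),
          (blockM A π α β * exp ((t - ξ) • blockM A π β β)) i j ∂(m β j) := by
  intro α t _ i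
  refine Finset.sum_congr rfl fun β _ => ?_
  set C := blockM A π β β
  have hint (j k) : Integrable (fun ξ => exp ((-ξ) • C) j k) ((m β k).restrict (Set.Iic 0)) :=
    haveI := hm_fin β k
    integrableOn_exp_neg_smul_apply (blockM_apply_nonneg_of_ne hoffdiag π β)
      (sum_blockM_apply_nonpos hoffdiag hcolsum π β) _ j k
  have hn0 : (fun j : {j : Ω // π j = β} => n0 j.1) =
      fun j => ∑ k, ∫ ξ in Set.Iic 0, exp ((-ξ) • C) j k ∂(m β k) := funext (hrep β)
  rw [hn0, mulVec_sum_integral _ _ _ hint]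
  refine Finset.sum_congr rfl fun k _ => integral_congr_ae (ae_of_all _ fun ξ => ?_)
  dsimp only
  rw [Matrix.mul_assoc, ← exp_add_of_commute _ _ ((Commute.refl C).smul_left t |>.smul_right _),
    ← add_smul, sub_eq_add_neg]

/-- **Initial data of ODEs compatible with a structured-population reformulation.**
If the initial datum of `dn/dt = An` admits the representation
`n_β⁰ = ∫_{(−∞,0]} e^{−ξA_{ββ}} m_β(dξ)` for vectors `m_β` of finite nonnegative measures
on `(−∞,0]`, then the forcing function `S_α⁰(t) = ∑_{β≠α} A_{αβ}e^{tA_{ββ}} n_β⁰` of the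
associated generalized RFE admits the representation
`S_α⁰(t) = ∑_{β≠α} ∫_{(−∞,0]} G_{βα}(t−ξ) m_β(dξ)` with `G_{βα}(s) = A_{αβ}e^{sA_{ββ}}`;
consequently the generalized RFE for `N_α` can be reformulated as a structured population
system with an age variable. -/
theorem ode_initial_data_age_structure [Fintype Ω] [DecidableEq Ω] [Fintype X] [DecidableEq X]
    (A : Matrix Ω Ω ℝ) (π : Ω → X)
    (hoffdiag : ∀ i j, i ≠ j → 0 ≤ A i j)
    (hcolsum : ∀ j, ∑ i, A i j = 0)
    (n : ℝ → Ω → ℝ) (n0 : Ω → ℝ)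
    (hODE : ∀ i t, HasDerivAt (fun s => n s i) (A.mulVec (n t) i) t)
    (hinit : n 0 = n0)
    -- `m_β`: vectors of finite nonnegative measures supported on `(−∞,0]`
    (m : (β : X) → {j : Ω // π j = β} → Measure ℝ)
    (hm_fin : ∀ β j, IsFiniteMeasure (m β j))
    (hm_supp : ∀ β j, m β j (Set.Ioi 0) = 0)
    -- the representation `n_β⁰ = ∫_{(−∞,0]} e^{−ξ A_{ββ}} m_β(dξ)` (entrywise)
    (hrep : ∀ (β : X) (i : {i : Ω // π i = β}),
        n0 i.1 = ∑ j : {j : Ω // π j = β},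
          ∫ ξ in Set.Iic (0:ℝ), exp ((-ξ) • blockM A π β β) i j ∂(m β j)) :
    -- the representation of the forcing function `S_α⁰`
    ∀ (α : X) (t : ℝ), 0 ≤ t → ∀ i : {i : Ω // π i = α},
      (∑ β ∈ Finset.univ.erase α,
        (blockM A π α β * exp (t • blockM A π β β)).mulVec (fun j => n0 j.1) i) =
      ∑ β ∈ Finset.univ.erase α, ∑ j : {j : Ω // π j = β},
        ∫ ξ in Set.Iic (0:ℝ),
          (blockM A π α β * exp ((t - ξ) • blockM A π β β)) i j ∂(m β j) :=
  ode_initial_data_age_structure_general A π hoffdiag hcolsum n0 m hm_fin hrep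
end

section
/- Let a, b > 0 with b² > 4a, let A = [[−b, a], [−1, 0]] ∈ ℝ^{2×2}, and set λ_± = (−b ± √(b²−4a))/2, so λ_− < λ_+ < 0. Define the response function Φ(t) = b · (exp(tA))_{11} (equivalently Φ(t) = (b, 0) exp(At) e₁ where e₁ = (1,0)^⊤). Then Φ(t) = (b/√(b²−4a)) (λ_+ e^{λ_+ t} − λ_− e^{λ_− t}) for all t ≥ 0, and ∫₀^∞ Φ(t) dt = 0. -/
open MeasureTheory Matrix NormedSpace

/-!
Since `-b = λ₊ + λ₋` and `a = λ₊ λ₋`, the matrix `A` is the companion matrix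
`!![λ₊ + λ₋, λ₊ λ₋; -1, 0]`, with eigenvectors `(-λ₊, 1)` and `(-λ₋, 1)`. Diagonalising gives
`(exp (t A))₁₁ = (λ₊ e^{λ₊ t} - λ₋ e^{λ₋ t}) / (λ₊ - λ₋)`. As `λ± < 0`, each term `λ e^{λ t}`
integrates over `[0, ∞)` to `-1`, so the two contributions cancel.
-/

theorem Matrix.exp_smul_eq_of_mul_eq_mul_diagonal {n : Type*} [Fintype n] [DecidableEq n]
    {A P : Matrix n n ℝ} {d : n → ℝ} (hP : IsUnit P.det) (hAP : A * P = P * diagonal d)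
    (t : ℝ) : exp (t • A) = P * diagonal (fun i => Real.exp (t * d i)) * P⁻¹ := by
  have hA : A = P * diagonal d * P⁻¹ := by rw [← hAP, mul_nonsing_inv_cancel_right _ _ hP]
  have htA : t • A = P * diagonal (t • d) * P⁻¹ := by
    rw [hA, diagonal_smul, mul_smul_comm, smul_mul_assoc]
  rw [htA, exp_conj _ _ ((isUnit_iff_isUnit_det P).2 hP), exp_diagonal,
    Real.exp_eq_exp_ℝ, Pi.exp_def]
  rfl

section Companion

variable (p q : ℝ)

theorem companion_mul_eigenvectors :
    !![p + q, p * q; -1, 0] * !![-p, -q; 1, 1] = !![-p, -q; 1, 1] * diagonal ![p, q] := by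
  ext i j
  fin_cases i <;> fin_cases j <;> simp [Matrix.mul_apply] <;> ring

variable {p q}

theorem eigenvectors_mul_inverse (hpq : p ≠ q) :
    !![-p, -q; 1, 1] * ((p - q)⁻¹ • !![-1, -q; 1, p]) = 1 := by
  have : p - q ≠ 0 := sub_ne_zero.2 hpq
  ext i j
  fin_cases i <;> fin_cases j <;> simp [Matrix.mul_apply] <;> field_simp <;> ring

theorem exp_smul_companion_apply_zero_zero (hpq : p ≠ q) (t : ℝ) :
    exp (t • !![p + q, p * q; -1, 0]) 0 0
      = (p * Real.exp (p * t) - q * Real.exp (q * t)) / (p - q) := by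
  have hinv := eigenvectors_mul_inverse hpq
  rw [Matrix.exp_smul_eq_of_mul_eq_mul_diagonal (isUnit_det_of_right_inverse hinv)
    (companion_mul_eigenvectors p q), inv_eq_right_inv hinv]
  simp [Matrix.mul_apply, vecMul_diagonal, mul_comm t]
  ring

end Companion

theorem integral_mul_exp_mul_Ioi_zero {l : ℝ} (hl : l < 0) :
    ∫ t in Set.Ioi (0 : ℝ), l * Real.exp (l * t) = -1 := by
  rw [integral_const_mul, integral_exp_mul_Ioi hl, mul_zero, Real.exp_zero]
  field_simp [hl.ne]

theorem integral_sub_mul_exp_mul_Ioi_zero {p q : ℝ} (hp : p < 0) (hq : q < 0) :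
    ∫ t in Set.Ioi (0 : ℝ), (p * Real.exp (p * t) - q * Real.exp (q * t)) = 0 := by
  rw [integral_sub ((integrableOn_exp_mul_Ioi hp 0).const_mul p)
    ((integrableOn_exp_mul_Ioi hq 0).const_mul q), integral_mul_exp_mul_Ioi_zero hp,
    integral_mul_exp_mul_Ioi_zero hq, sub_self]

/-- **Response function of the linear adaptation model.**
For `a, b > 0` with `b² > 4a` and `A = [[−b, a], [−1, 0]]`, setting
`λ_± = (−b ± √(b²−4a))/2` one has `λ_− < λ_+ < 0`, the response function
`Φ(t) = b (e^{tA})_{11}` equals `(b/√(b²−4a))(λ_+ e^{λ_+t} − λ_− e^{λ_−t})` for all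
`t ≥ 0`, and `∫₀^∞ Φ(t) dt = 0` (exact adaptation). -/
theorem adaptation_response_function (a b : ℝ) (ha : 0 < a) (hb : 0 < b)
    (hdisc : 4 * a < b ^ 2)
    (A : Matrix (Fin 2) (Fin 2) ℝ) (hA : A = !![-b, a; -1, 0])
    (Φ : ℝ → ℝ) (hΦ : ∀ t, Φ t = b * NormedSpace.exp (t • A) 0 0)
    (lp lm : ℝ)
    (hlp : lp = (-b + Real.sqrt (b ^ 2 - 4 * a)) / 2)
    (hlm : lm = (-b - Real.sqrt (b ^ 2 - 4 * a)) / 2) :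
    lm < lp ∧ lp < 0 ∧
    (∀ t : ℝ, 0 ≤ t →
      Φ t = b / Real.sqrt (b ^ 2 - 4 * a) *
        (lp * Real.exp (lp * t) - lm * Real.exp (lm * t))) ∧
    (∫ t in Set.Ici (0:ℝ), Φ t) = 0 := by
  set s := Real.sqrt (b ^ 2 - 4 * a)
  have hs_pos : 0 < s := Real.sqrt_pos.2 (by linarith)
  have hs_lt : s < b := (Real.sqrt_lt' hb).2 (by linarith)
  have hsum : lp + lm = -b := by rw [hlp, hlm]; ring
  have hprod : lp * lm = a := by
    rw [hlp, hlm]; linear_combination (-1 / 4) * Real.sq_sqrt (by linarith : 0 ≤ b ^ 2 - 4 * a)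
  have hdiff : lp - lm = s := by rw [hlp, hlm]; ring
  have hlp_neg : lp < 0 := by rw [hlp]; linarith
  have hA' : A = !![lp + lm, lp * lm; -1, 0] := by rw [hA, hsum, hprod]
  have hΦ' (t : ℝ) : Φ t = b / s * (lp * Real.exp (lp * t) - lm * Real.exp (lm * t)) := by
    rw [hΦ, hA', exp_smul_companion_apply_zero_zero (by linarith) t, hdiff]
    ring
  refine ⟨by linarith, hlp_neg, fun t _ => hΦ' t, ?_⟩
  rw [integral_Ici_eq_integral_Ioi, setIntegral_congr_fun measurableSet_Ioi fun t _ => hΦ' t,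
    integral_const_mul, integral_sub_mul_exp_mul_Ioi_zero hlp_neg (by linarith), mul_zero]
end
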